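/- arXiv:1909.10199 — 16 statements merged into one kernel-verified Lean document; each statement's English description precedes it below -/
import Mathlib

section
/- In the scheduling game with 5 jobs N = {a,b,c,d,e} of weights w_a=5, w_b=4, w_c=4.5, w_d=9.25, w_e=2, and 3 machines with delays c_1=1, c_2=c_3=2, priority lists π_1=(a,b,c,d,e) and π_2=π_3=(e,d,b,c,a), there exists no pure Nash equilibrium. -/
/-- Cost of job `i` in scheduling game with weights `w`, machine delays `c`,
priority lists `π` (per machine), at profile `s`. -/
def schedCost {n m : ℕ} (w : Fin n → ℝ) (c : Fin m → ℝ) (π : Fin m → Fin n → Fin n)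
    (s : Fin n → Fin m) (i : Fin n) : ℝ :=
  c (s i) * ∑ i' ∈ Finset.univ.filter (fun i' => s i' = s i ∧ π (s i) i' ≤ π (s i) i), w i'

/-- Pure Nash equilibrium: no job can strictly decrease its cost by switching machine. -/
def schedNE {n m : ℕ} (w : Fin n → ℝ) (c : Fin m → ℝ) (π : Fin m → Fin n → Fin n)
    (s : Fin n → Fin m) : Prop :=
  ∀ i j, schedCost w c π s i ≤ schedCost w c π (Function.update s i j) i

/-! Best responses cycle: in any equilibrium `a` sits on machine 1 and `e` on a slow machine
(each is first in line there), and `d` avoids `e`'s machine. If `d` is on machine 1, then `c`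
is not, and `b` and `c` cannot both be stable; if `d` is on the other slow machine, its
stability forces `c`, and then `b`, onto machine 1, from where `c` would rather join `e`.

Multiplying all weights by `4` leaves the equilibria unchanged and makes every weight and
delay a natural number, so the `3 ^ 5` profiles can be checked by computation. -/

section Scheduling

variable {n m : ℕ} (π : Fin m → Fin n → Fin n)

theorem schedCost_mul_weights (k : ℝ) (w : Fin n → ℝ) (c : Fin m → ℝ) (s : Fin n → Fin m)
    (i : Fin n) :
    schedCost (fun i => k * w i) c π s i = k * schedCost w c π s i := by
  unfold schedCost
  rw [← Finset.mul_sum]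
  ring

theorem schedNE_mul_weights_iff {k : ℝ} (hk : 0 < k) (w : Fin n → ℝ) (c : Fin m → ℝ)
    (s : Fin n → Fin m) :
    schedNE (fun i => k * w i) c π s ↔ schedNE w c π s := by
  simp only [schedNE, schedCost_mul_weights, mul_le_mul_iff_right₀ hk]

def natCost (w : Fin n → ℕ) (c : Fin m → ℕ) (s : Fin n → Fin m) (i : Fin n) : ℕ :=
  c (s i) * ∑ i' ∈ Finset.univ.filter (fun i' => s i' = s i ∧ π (s i) i' ≤ π (s i) i), w i'

def natNE (w : Fin n → ℕ) (c : Fin m → ℕ) (s : Fin n → Fin m) : Prop :=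
  ∀ i j, natCost π w c s i ≤ natCost π w c (Function.update s i j) i

instance (w : Fin n → ℕ) (c : Fin m → ℕ) (s : Fin n → Fin m) : Decidable (natNE π w c s) := by
  unfold natNE
  infer_instance

theorem schedCost_natCast (w : Fin n → ℕ) (c : Fin m → ℕ) (s : Fin n → Fin m) (i : Fin n) :
    schedCost (fun i => (w i : ℝ)) (fun j => (c j : ℝ)) π s i = natCost π w c s i := by
  unfold schedCost natCost
  push_cast
  rfl

theorem schedNE_natCast_iff (w : Fin n → ℕ) (c : Fin m → ℕ) (s : Fin n → Fin m) :
    schedNE (fun i => (w i : ℝ)) (fun j => (c j : ℝ)) π s ↔ natNE π w c s := by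
  simp only [schedNE, natNE, schedCost_natCast, Nat.cast_le]

end Scheduling

/-- Jobs `a, b, c, d, e` are `0, …, 4`. -/
theorem stmt0 :
    ¬ ∃ s : Fin 5 → Fin 3,
      schedNE (![5, 4, 4.5, 9.25, 2]) (![1, 2, 2])
        (![![0,1,2,3,4], ![4,2,3,1,0], ![4,2,3,1,0]]) s := by
  set π : Fin 3 → Fin 5 → Fin 5 := ![![0,1,2,3,4], ![4,2,3,1,0], ![4,2,3,1,0]]
  have no_natNE : ∀ s, ¬ natNE π ![20, 16, 18, 37, 8] ![1, 2, 2] s := by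
    set_option maxRecDepth 100000 in decide
  have hw : ![5, 4, 4.5, 9.25, 2] = fun i => 4⁻¹ * ((![20, 16, 18, 37, 8] i : ℕ) : ℝ) := by
    funext i; fin_cases i <;> norm_num
  have hc : ![1, 2, 2] = fun j => ((![1, 2, 2] j : ℕ) : ℝ) := by
    funext j; fin_cases j <;> norm_num
  rintro ⟨s, hs⟩
  rw [hw, hc, schedNE_mul_weights_iff π (by norm_num), schedNE_natCast_iff] at hs
  exact no_natNE s hs
end

section
/- In the scheduling game with 4 jobs N = {a,b,c,d} of weights w_a=5, w_b=4, w_c=13/3, w_d=9.25, and 3 machines with delays c_j=j for j∈{1,2,3}, priority lists π_1=(a,b,c,d) and π_2=π_3=(d,b,c,a), there exists no pure Nash equilibrium. -/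
noncomputable def makespan {n m : ℕ} (w : Fin n → ℝ) (c : Fin m → ℝ) (π : Fin m → Fin n → Fin n)
    (s : Fin n → Fin m) : ℝ :=
  ⨆ i, schedCost w c π s i

/-- weights times 12 -/
def nCost (s : Fin 4 → Fin 3) (i : Fin 4) : ℕ :=
  (![1,2,3] : Fin 3 → ℕ) (s i) *
    ∑ i' ∈ Finset.univ.filter (fun i' => s i' = s i ∧
      (![![0,1,2,3], ![3,1,2,0], ![3,1,2,0]] : Fin 3 → Fin 4 → Fin 4) (s i) i' ≤
      (![![0,1,2,3], ![3,1,2,0], ![3,1,2,0]] : Fin 3 → Fin 4 → Fin 4) (s i) i),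
      (![60,48,52,111] : Fin 4 → ℕ) i'

lemma key (s : Fin 4 → Fin 3) (i : Fin 4) :
    schedCost (![5, 4, 13/3, 9.25]) (![1, 2, 3])
      (![![0,1,2,3], ![3,1,2,0], ![3,1,2,0]]) s i = (nCost s i : ℝ) / 12 := by
  have hc : ∀ j : Fin 3, (![1,2,3] : Fin 3 → ℝ) j = ((![1,2,3] : Fin 3 → ℕ) j : ℝ) := by
    intro j; fin_cases j <;> norm_num
  have hw : ∀ k : Fin 4, (![5, 4, 13/3, 9.25] : Fin 4 → ℝ) k
      = ((![60,48,52,111] : Fin 4 → ℕ) k : ℝ) / 12 := by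
    intro k; fin_cases k <;> norm_num
  rw [schedCost, nCost, hc]
  rw [Finset.sum_congr rfl (fun k _ => hw k)]
  rw [← Finset.sum_div]
  push_cast
  ring

/-- The 4-job (a,b,c,d = 0,1,2,3), 3-machine game with delays 1,2,3 has no pure NE. -/
theorem stmt1 :
    ¬ ∃ s : Fin 4 → Fin 3,
      schedNE (![5, 4, 13/3, 9.25]) (![1, 2, 3])
        (![![0,1,2,3], ![3,1,2,0], ![3,1,2,0]]) s := by
  rintro ⟨s, hs⟩
  have hd : ∀ s : Fin 4 → Fin 3, ∃ i j, nCost (Function.update s i j) i < nCost s i := by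
    decide
  obtain ⟨i, j, hlt⟩ := hd s
  have h := hs i j
  rw [key, key] at h
  have : (nCost (Function.update s i j) i : ℝ) < (nCost s i : ℝ) := by exact_mod_cast hlt
  linarith
end

section
/- In every scheduling game on exactly 2 machines (with arbitrary weights, delays, and priority lists), a pure Nash equilibrium exists. -/
/-!
Let `a` be the slower machine (`c b ≤ c a`). Scan the jobs in `a`'s priority order and put a job
on `a` iff it strictly prefers `a`, judging `a` by the jobs already placed there and `b`,
pessimistically, by every job ahead of it on `b` that is not (yet) on `a`.
A job sent to `b` stays content: its queue on `a` is final and its queue on `b` can only shrink.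
A job `x` sent to `a` has a final queue on `a`, but its queue on `b` may shrink when later jobs `y`
ahead of it on `b` move to `a`. The last such `y` preferred `a` although `x` was already ahead of
it there; since `c b ≤ c a`, that choice bounds `x`'s cost on `a` by its final cost on `b`.
-/

open Finset Function

section Greedy

variable {ι β : Type*} [Fintype ι] [DecidableEq ι] [LinearOrder β]
  (w : ι → ℝ) (ca cb : ℝ) (ra : ι → ℕ) (pb : ι → β)

def queueAhead (T : Finset ι) (x : ι) : Finset ι :=
  univ.filter (fun z => pb z < pb x ∧ z ∉ T)

def PrefersFirst (T : Finset ι) (x : ι) : Prop :=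
  ca * (w x + ∑ z ∈ T, w z) < cb * (w x + ∑ z ∈ queueAhead pb T x, w z)

open Classical in
noncomputable def greedyStage : ℕ → Finset ι
  | 0 => ∅
  | k + 1 => greedyStage k ∪
      univ.filter (fun x => ra x = k ∧ PrefersFirst w ca cb pb (greedyStage k) x)

noncomputable def greedySet : Finset ι :=
  univ.filter (fun x => x ∈ greedyStage w ca cb ra pb (ra x + 1))

variable {w ca cb ra pb}

theorem queueAhead_anti {S T : Finset ι} (h : S ⊆ T) (x : ι) :
    queueAhead pb T x ⊆ queueAhead pb S x := by
  intro z hz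
  simp only [queueAhead, mem_filter, mem_univ, true_and] at hz ⊢
  exact ⟨hz.1, fun hzS => hz.2 (h hzS)⟩

theorem mem_greedyStage_iff {k : ℕ} {x : ι} :
    x ∈ greedyStage w ca cb ra pb k ↔
      ra x < k ∧ PrefersFirst w ca cb pb (greedyStage w ca cb ra pb (ra x)) x := by
  induction k with
  | zero => simp [greedyStage]
  | succ k ih =>
    simp only [greedyStage, mem_union, ih, mem_filter, mem_univ, true_and]
    constructor
    · rintro (⟨hk, hx⟩ | ⟨rfl, hx⟩) <;> exact ⟨by omega, hx⟩
    · rintro ⟨hk, hx⟩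
      rcases Nat.lt_succ_iff_lt_or_eq.mp hk with hk | rfl
      · exact Or.inl ⟨hk, hx⟩
      · exact Or.inr ⟨rfl, hx⟩

theorem mem_greedySet_iff {x : ι} :
    x ∈ greedySet w ca cb ra pb ↔
      PrefersFirst w ca cb pb (greedyStage w ca cb ra pb (ra x)) x := by
  simp [greedySet, mem_greedyStage_iff]

theorem greedyStage_eq_filter (k : ℕ) :
    greedyStage w ca cb ra pb k = (greedySet w ca cb ra pb).filter (fun z => ra z < k) := by
  ext x
  simp only [mem_filter, mem_greedyStage_iff, mem_greedySet_iff]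
  tauto

theorem greedyStage_subset_greedySet (k : ℕ) :
    greedyStage w ca cb ra pb k ⊆ greedySet w ca cb ra pb := by
  rw [greedyStage_eq_filter]
  exact filter_subset _ _

theorem insert_greedyStage_subset {x y : ι} (hx : x ∈ greedySet w ca cb ra pb)
    (hxy : ra x < ra y) :
    insert x (greedyStage w ca cb ra pb (ra x)) ⊆ greedyStage w ca cb ra pb (ra y) := by
  simp only [greedyStage_eq_filter, insert_subset_iff, mem_filter]
  exact ⟨⟨hx, hxy⟩, monotone_filter_right _ fun z _ hz => hz.trans hxy⟩

theorem queueAhead_greedyStage_subset (hra : Injective ra) {x y : ι} (hyx : pb y ≤ pb x)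
    (hlast : ∀ z ∈ greedySet w ca cb ra pb, ra y < ra z → ¬ pb z < pb x) :
    queueAhead pb (greedyStage w ca cb ra pb (ra y)) y
      ⊆ queueAhead pb (greedySet w ca cb ra pb) x := by
  intro z hz
  simp only [queueAhead, mem_filter, mem_univ, true_and, greedyStage_eq_filter, not_and,
    not_lt] at hz ⊢
  obtain ⟨hzy, hzG⟩ := hz
  refine ⟨hzy.trans_le hyx, fun hz => ?_⟩
  have hne : ra z ≠ ra y := fun h => hzy.ne (congrArg pb (hra h))
  exact hlast z hz (lt_of_le_of_ne (hzG hz) hne.symm) (hzy.trans_le hyx)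

theorem second_le_first_of_notMem_greedySet (hw : ∀ i, 0 ≤ w i) (hcb : 0 ≤ cb) {x : ι}
    (hx : x ∉ greedySet w ca cb ra pb) :
    cb * (w x + ∑ z ∈ queueAhead pb (greedySet w ca cb ra pb) x, w z)
      ≤ ca * (w x + ∑ z ∈ greedyStage w ca cb ra pb (ra x), w z) := by
  rw [mem_greedySet_iff, PrefersFirst, not_lt] at hx
  refine le_trans (mul_le_mul_of_nonneg_left (add_le_add_right ?_ _) hcb) hx
  exact sum_le_sum_of_subset_of_nonneg
    (queueAhead_anti (greedyStage_subset_greedySet _) x) fun z _ _ => hw z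

theorem first_le_second_of_mem_greedySet (hw : ∀ i, 0 ≤ w i) (hcb : 0 ≤ cb) (hba : cb ≤ ca)
    (hra : Injective ra) {x : ι} (hx : x ∈ greedySet w ca cb ra pb) :
    ca * (w x + ∑ z ∈ greedyStage w ca cb ra pb (ra x), w z)
      ≤ cb * (w x + ∑ z ∈ queueAhead pb (greedySet w ca cb ra pb) x, w z) := by
  set G := greedySet w ca cb ra pb
  set D := G.filter (fun z => ra x < ra z ∧ pb z < pb x)
  rcases D.eq_empty_or_nonempty with hD | hD
  · have hsub : queueAhead pb (greedyStage w ca cb ra pb (ra x)) x ⊆ queueAhead pb G x :=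
      queueAhead_greedyStage_subset hra le_rfl fun z hz hxz hzx =>
        (eq_empty_iff_forall_notMem.1 hD) z (mem_filter.2 ⟨hz, hxz, hzx⟩)
    refine (mem_greedySet_iff.1 hx).le.trans
      (mul_le_mul_of_nonneg_left (add_le_add_right ?_ _) hcb)
    exact sum_le_sum_of_subset_of_nonneg hsub fun z _ _ => hw z
  · obtain ⟨y, hyD, hymax⟩ := exists_max_image D ra hD
    obtain ⟨hyG, hxy, hyx⟩ := mem_filter.1 hyD
    have hsub : queueAhead pb (greedyStage w ca cb ra pb (ra y)) y ⊆ queueAhead pb G x :=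
      queueAhead_greedyStage_subset hra hyx.le fun z hz hyz hzx =>
        (hymax z (mem_filter.2 ⟨hz, hxy.trans hyz, hzx⟩)).not_gt hyz
    have hload : w x + ∑ z ∈ greedyStage w ca cb ra pb (ra x), w z
        ≤ ∑ z ∈ greedyStage w ca cb ra pb (ra y), w z := by
      rw [← sum_insert fun h => (mem_greedyStage_iff.1 h).1.false]
      exact sum_le_sum_of_subset_of_nonneg (insert_greedyStage_subset hx hxy) fun z _ _ => hw z
    have hy := mem_greedySet_iff.1 hyG
    rw [PrefersFirst] at hy
    calc ca * (w x + ∑ z ∈ greedyStage w ca cb ra pb (ra x), w z)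
        ≤ ca * ∑ z ∈ greedyStage w ca cb ra pb (ra y), w z :=
          mul_le_mul_of_nonneg_left hload (hcb.trans hba)
      _ ≤ cb * ∑ z ∈ queueAhead pb (greedyStage w ca cb ra pb (ra y)) y, w z := by
          -- `y` chose the first machine although its own weight costs `ca ≥ cb` there
          nlinarith [mul_le_mul_of_nonneg_right hba (hw y)]
      _ ≤ cb * ∑ z ∈ queueAhead pb G x, w z :=
          mul_le_mul_of_nonneg_left (sum_le_sum_of_subset_of_nonneg hsub fun z _ _ => hw z) hcb
      _ ≤ cb * (w x + ∑ z ∈ queueAhead pb G x, w z) :=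
          mul_le_mul_of_nonneg_left (le_add_of_nonneg_left (hw x)) hcb

end Greedy

section Schedule

variable {n m : ℕ} (w : Fin n → ℝ) (c : Fin m → ℝ) (π : Fin m → Fin n → Fin n)

def deviationCost (s : Fin n → Fin m) (i : Fin n) (j : Fin m) : ℝ :=
  c j * (w i + ∑ z ∈ univ.filter (fun z => s z = j ∧ π j z < π j i), w z)

theorem schedCost_update_self (s : Fin n → Fin m) (i : Fin n) {j : Fin m}
    (hπ : Injective (π j)) :
    schedCost w c π (update s i j) i = deviationCost w c π s i j := by
  have hqueue : univ.filter (fun z => update s i j z = j ∧ π j z ≤ π j i)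
      = insert i (univ.filter (fun z => s z = j ∧ π j z < π j i)) := by
    ext z
    rcases eq_or_ne z i with rfl | hz
    · simp
    · simp [hz, le_iff_lt_or_eq, hπ.eq_iff]
  rw [schedCost, update_self, hqueue, sum_insert (by simp), deviationCost]

theorem schedNE_iff (hπ : ∀ j, Injective (π j)) (s : Fin n → Fin m) :
    schedNE w c π s ↔
      ∀ i j, deviationCost w c π s i (s i) ≤ deviationCost w c π s i j := by
  refine forall₂_congr fun i j => ?_
  rw [← schedCost_update_self w c π s i (hπ _), update_eq_self,
    schedCost_update_self w c π s i (hπ j)]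

end Schedule

theorem exists_schedNE_of_le {n : ℕ} (w : Fin n → ℝ) (hw : ∀ i, 0 ≤ w i)
    (c : Fin 2 → ℝ) (π : Fin 2 → Fin n → Fin n) (hπ : ∀ j, Injective (π j))
    {a b : Fin 2} (hab : a ≠ b) (hcb : 0 ≤ c b) (hba : c b ≤ c a) :
    ∃ s : Fin n → Fin 2, schedNE w c π s := by
  set ra : Fin n → ℕ := fun z => π a z
  have hra : Injective ra := Fin.val_injective.comp (hπ a)
  set G := greedySet w (c a) (c b) ra (π b)
  set s : Fin n → Fin 2 := fun z => if z ∈ G then a else b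
  have hqa (i : Fin n) : univ.filter (fun z => s z = a ∧ π a z < π a i)
      = greedyStage w (c a) (c b) ra (π b) (ra i) := by
    ext z
    simp [greedyStage_eq_filter, s, G, ra, hab.symm]
  have hqb (i : Fin n) :
      univ.filter (fun z => s z = b ∧ π b z < π b i) = queueAhead (π b) G i := by
    ext z
    simp [queueAhead, s, hab, and_comm]
  refine ⟨s, (schedNE_iff w c π hπ s).2 fun i j => ?_⟩
  have hj : j = a ∨ j = b := by omega
  by_cases hi : i ∈ G
  · have hsi : s i = a := if_pos hi
    rcases hj with rfl | rfl
    · rw [hsi]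
    · rw [hsi, deviationCost, deviationCost, hqa, hqb]
      exact first_le_second_of_mem_greedySet hw hcb hba hra hi
  · have hsi : s i = b := if_neg hi
    rcases hj with rfl | rfl
    · rw [hsi, deviationCost, deviationCost, hqa, hqb]
      exact second_le_first_of_notMem_greedySet hw hcb hi
    · rw [hsi]

/-- Every scheduling game on exactly two machines has a pure Nash equilibrium. -/
theorem stmt2 {n : ℕ} (w : Fin n → ℝ) (hw : ∀ i, 0 < w i)
    (c : Fin 2 → ℝ) (hc : ∀ j, 0 < c j)
    (π : Fin 2 → Fin n → Fin n) (hπ : ∀ j, Function.Bijective (π j)) :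
    ∃ s : Fin n → Fin 2, schedNE w c π s := by
  have hinj : ∀ j, Injective (π j) := fun j => (hπ j).injective
  rcases le_total (c 0) (c 1) with h | h
  · exact exists_schedNE_of_le w (fun i => (hw i).le) c π hinj one_ne_zero (hc 0).le h
  · exact exists_schedNE_of_le w (fun i => (hw i).le) c π hinj zero_ne_one (hc 1).le h
end

section
/- In every scheduling game with at most 3 jobs (arbitrary number of machines, arbitrary weights, delays, and priority lists), a pure Nash equilibrium exists. -/
namespace SchedAux

variable {n m : ℕ} (w : Fin n → ℝ) (c : Fin m → ℝ) (π : Fin m → Fin n → Fin n)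

def F (s : Fin n → Fin m) (i : Fin n) (j : Fin m) : ℝ :=
  c j * ∑ i' ∈ Finset.univ.filter (fun i' => i' = i ∨ (s i' = j ∧ π j i' < π j i)), w i'

lemma cost_eq (hπ : ∀ j, Function.Injective (π j)) (s : Fin n → Fin m) (i : Fin n) :
    schedCost w c π s i = F w c π s i (s i) := by
  unfold schedCost F
  congr 1
  apply Finset.sum_congr _ (fun x _ => rfl)
  ext i'
  simp only [Finset.mem_filter, Finset.mem_univ, true_and]
  constructor
  · rintro ⟨hs, hle⟩
    rcases eq_or_ne i' i with rfl | hne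
    · exact Or.inl rfl
    · exact Or.inr ⟨hs, lt_of_le_of_ne hle fun h => hne (hπ (s i) h)⟩
  · rintro (rfl | ⟨hs, hlt⟩)
    · exact ⟨rfl, le_refl _⟩
    · exact ⟨hs, hlt.le⟩

lemma update_eq (hπ : ∀ j, Function.Injective (π j)) (s : Fin n → Fin m) (i : Fin n)
    (j : Fin m) :
    schedCost w c π (Function.update s i j) i = F w c π s i j := by
  unfold schedCost F
  simp only [Function.update_self]
  congr 1
  apply Finset.sum_congr _ (fun x _ => rfl)
  ext i'
  simp only [Finset.mem_filter, Finset.mem_univ, true_and]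
  rcases eq_or_ne i' i with rfl | hne
  · simp
  · rw [Function.update_of_ne hne]
    constructor
    · rintro ⟨hs, hle⟩
      exact Or.inr ⟨hs, lt_of_le_of_ne hle fun h => hne (hπ j h)⟩
    · rintro (h | ⟨hs, hlt⟩)
      · exact absurd h hne
      · exact ⟨hs, hlt.le⟩

lemma F_ge (hw : ∀ i, 0 < w i) (hc : ∀ j, 0 < c j) (s : Fin n → Fin m) (i : Fin n)
    (j : Fin m) : c j * w i ≤ F w c π s i j := by
  unfold F
  have hmem : i ∈ Finset.univ.filter (fun i' => i' = i ∨ (s i' = j ∧ π j i' < π j i)) := by simp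
  have h := Finset.single_le_sum (f := w) (fun k _ => (hw k).le) hmem
  exact mul_le_mul_of_nonneg_left h (hc j).le

lemma ne_crit (hπ : ∀ j, Function.Injective (π j)) (s : Fin n → Fin m)
    (h : ∀ i j, F w c π s i (s i) ≤ F w c π s i j) : schedNE w c π s := by
  intro i j
  rw [cost_eq w c π hπ, update_eq w c π hπ]
  exact h i j

lemma F_eval1 {i : Fin n} (hU : (Finset.univ : Finset (Fin n)) = {i}) (s : Fin n → Fin m)
    (j : Fin m) : F w c π s i j = c j * w i := by
  unfold F
  rw [Finset.sum_filter, hU, Finset.sum_singleton]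
  simp

lemma F_eval2 {f a : Fin n} (hU : (Finset.univ : Finset (Fin n)) = {f, a}) (hfa : f ≠ a)
    (s : Fin n → Fin m) (i : Fin n) (j : Fin m) :
    F w c π s i j = c j *
      ((if f = i ∨ (s f = j ∧ π j f < π j i) then w f else 0) +
       (if a = i ∨ (s a = j ∧ π j a < π j i) then w a else 0)) := by
  unfold F
  rw [Finset.sum_filter, hU, Finset.sum_insert (by simp [hfa]), Finset.sum_singleton]

lemma F_eval3 {f a b : Fin n} (hU : (Finset.univ : Finset (Fin n)) = {f, a, b})
    (hfa : f ≠ a) (hfb : f ≠ b) (hab : a ≠ b) (s : Fin n → Fin m) (i : Fin n) (j : Fin m) :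
    F w c π s i j = c j *
      ((if f = i ∨ (s f = j ∧ π j f < π j i) then w f else 0) +
       ((if a = i ∨ (s a = j ∧ π j a < π j i) then w a else 0) +
        (if b = i ∨ (s b = j ∧ π j b < π j i) then w b else 0))) := by
  unfold F
  rw [Finset.sum_filter, hU, Finset.sum_insert (by simp [hfa, hfb]),
    Finset.sum_insert (by simp [hab]), Finset.sum_singleton]

end SchedAux

open SchedAux in
/-- Every scheduling game with at most 3 jobs has a pure Nash equilibrium. -/
theorem stmt3 {n m : ℕ} (hn : n ≤ 3) (hm : 0 < m)
    (w : Fin n → ℝ) (hw : ∀ i, 0 < w i)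
    (c : Fin m → ℝ) (hc : ∀ j, 0 < c j)
    (π : Fin m → Fin n → Fin n) (hπ : ∀ j, Function.Bijective (π j)) :
    ∃ s : Fin n → Fin m, schedNE w c π s := by
  have hinj : ∀ j, Function.Injective (π j) := fun j => (hπ j).injective
  interval_cases n
  · exact ⟨fun i => i.elim0, fun i => i.elim0⟩
  · -- n = 1
    obtain ⟨j0, -, hj0'⟩ := Finset.exists_min_image Finset.univ c ⟨⟨0, hm⟩, Finset.mem_univ _⟩
    refine ⟨fun _ => j0, ne_crit w c π hinj _ fun i j => ?_⟩
    have hU : (Finset.univ : Finset (Fin 1)) = {i} := by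
      symm; rw [Finset.eq_univ_iff_forall]; intro x; simp [Subsingleton.elim x i]
    rw [F_eval1 w c π hU, F_eval1 w c π hU]
    exact mul_le_mul_of_nonneg_right (hj0' j (Finset.mem_univ _)) (hw i).le
  · -- n = 2
    obtain ⟨j0, -, hj0'⟩ := Finset.exists_min_image Finset.univ c ⟨⟨0, hm⟩, Finset.mem_univ _⟩
    have hj0 : ∀ j, c j0 ≤ c j := fun j => hj0' j (Finset.mem_univ j)
    obtain ⟨f, -, hf'⟩ := Finset.exists_min_image Finset.univ (fun i => π j0 i)
      ⟨0, Finset.mem_univ _⟩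
    have hf : ∀ i, π j0 f ≤ π j0 i := fun i => hf' i (Finset.mem_univ i)
    have hcard : ({f}ᶜ : Finset (Fin 2)).card = 1 := by
      rw [Finset.card_compl]; simp
    obtain ⟨a, hC⟩ := Finset.card_eq_one.mp hcard
    have haf : a ≠ f := by
      have h : a ∈ ({f}ᶜ : Finset (Fin 2)) := by rw [hC]; simp
      simpa using h
    have hfa : f ≠ a := haf.symm
    have hU : (Finset.univ : Finset (Fin 2)) = {f, a} := by
      symm
      rw [Finset.eq_univ_iff_forall]
      intro x
      by_cases hx : x = f
      · simp [hx]
      · have h : x ∈ ({f}ᶜ : Finset (Fin 2)) := by simp [hx]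
        rw [hC] at h
        simp at h
        simp [h]
    have hpa : π j0 f < π j0 a := lt_of_le_of_ne (hf a) fun h => haf (hinj j0 h).symm
    obtain ⟨ja, -, hja'⟩ := Finset.exists_min_image Finset.univ
      (fun j => c j * (w a + if j = j0 then w f else 0)) ⟨j0, Finset.mem_univ _⟩
    have hja : ∀ j, c ja * (w a + if ja = j0 then w f else 0) ≤
        c j * (w a + if j = j0 then w f else 0) := fun j => hja' j (Finset.mem_univ j)
    set s : Fin 2 → Fin m := fun i => if i = f then j0 else ja with hs
    have sf : s f = j0 := by simp [hs]
    have sa : s a = ja := by simp [hs, haf]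
    refine ⟨s, ne_crit w c π hinj s fun i j => ?_⟩
    have hi : f = i ∨ a = i := by
      have hx := Finset.mem_univ i; rw [hU] at hx; simp at hx
      rcases hx with h | h
      · exact Or.inl h.symm
      · exact Or.inr h.symm
    rcases hi with rfl | rfl
    · rw [sf]
      have e : F w c π s f j0 = c j0 * w f := by
        rw [F_eval2 w c π hU hfa]
        simp [sf, sa, haf, not_lt.mpr (hf a)]
      rw [e]
      calc c j0 * w f ≤ c j * w f := mul_le_mul_of_nonneg_right (hj0 j) (hw f).le
        _ ≤ _ := F_ge w c π hw hc s f j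
    · rw [sa]
      have e : F w c π s a ja = c ja * (w a + if ja = j0 then w f else 0) := by
        rw [F_eval2 w c π hU hfa]
        rcases eq_or_ne ja j0 with h | h
        · simp [sf, hfa, h, hpa]
          exact Or.inl (add_comm _ _)
        · simp [sf, hfa, h, Ne.symm h]
      rw [e]
      refine le_trans (hja j) ?_
      rw [F_eval2 w c π hU hfa]
      rcases eq_or_ne j j0 with rfl | h
      · simp [sf, hfa, hpa]
        nlinarith [hc j, hw a, hw f]
      · simp [sf, hfa, h, Ne.symm h]
  · -- n = 3
    obtain ⟨j0, -, hj0'⟩ := Finset.exists_min_image Finset.univ c ⟨⟨0, hm⟩, Finset.mem_univ _⟩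
    have hj0 : ∀ j, c j0 ≤ c j := fun j => hj0' j (Finset.mem_univ j)
    obtain ⟨f, -, hf'⟩ := Finset.exists_min_image Finset.univ (fun i => π j0 i)
      ⟨0, Finset.mem_univ _⟩
    have hf : ∀ i, π j0 f ≤ π j0 i := fun i => hf' i (Finset.mem_univ i)
    have hcard : ({f}ᶜ : Finset (Fin 3)).card = 2 := by
      rw [Finset.card_compl]; simp
    obtain ⟨a, b, hab, hC⟩ := Finset.card_eq_two.mp hcard
    have haf : a ≠ f := by
      have h : a ∈ ({f}ᶜ : Finset (Fin 3)) := by rw [hC]; simp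
      simpa using h
    have hbf : b ≠ f := by
      have h : b ∈ ({f}ᶜ : Finset (Fin 3)) := by rw [hC]; simp
      simpa using h
    have hfa : f ≠ a := haf.symm
    have hfb : f ≠ b := hbf.symm
    have hU : (Finset.univ : Finset (Fin 3)) = {f, a, b} := by
      symm
      rw [Finset.eq_univ_iff_forall]
      intro x
      by_cases hx : x = f
      · simp [hx]
      · have h : x ∈ ({f}ᶜ : Finset (Fin 3)) := by simp [hx]
        rw [hC] at h
        simp at h
        rcases h with h | h <;> simp [h]
    have hpa : π j0 f < π j0 a := lt_of_le_of_ne (hf a) fun h => haf (hinj j0 h).symm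
    have hpb : π j0 f < π j0 b := lt_of_le_of_ne (hf b) fun h => hbf (hinj j0 h).symm
    obtain ⟨ja, -, hja'⟩ := Finset.exists_min_image Finset.univ
      (fun j => c j * (w a + if j = j0 then w f else 0)) ⟨j0, Finset.mem_univ _⟩
    have hja : ∀ j, c ja * (w a + if ja = j0 then w f else 0) ≤
        c j * (w a + if j = j0 then w f else 0) := fun j => hja' j (Finset.mem_univ j)
    by_cases hcase : ∃ j', (∀ j, c j' * (w b + if j' = j0 then w f else 0) ≤
        c j * (w b + if j = j0 then w f else 0)) ∧ j' ≠ ja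
    · -- case 1 : separate minimizers
      obtain ⟨jb, hjb, hnejb⟩ := hcase
      obtain ⟨s, sf, sa, sb⟩ : ∃ s : Fin 3 → Fin m, s f = j0 ∧ s a = ja ∧ s b = jb :=
        ⟨fun i => if i = f then j0 else if i = a then ja else jb,
          by simp, by simp [haf], by simp [hbf, Ne.symm hab]⟩
      refine ⟨s, ne_crit w c π hinj s fun i j => ?_⟩
      have hi : f = i ∨ a = i ∨ b = i := by
        have hx := Finset.mem_univ i; rw [hU] at hx; simp at hx
        rcases hx with h | h | h
        · exact Or.inl h.symm
        · exact Or.inr (Or.inl h.symm)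
        · exact Or.inr (Or.inr h.symm)
      rcases hi with rfl | rfl | rfl
      · rw [sf]
        have e : F w c π s f j0 = c j0 * w f := by
          rw [F_eval3 w c π hU hfa hfb hab]
          simp [sa, sb, haf, hbf, not_lt.mpr (hf a), not_lt.mpr (hf b)]
        rw [e]
        calc c j0 * w f ≤ c j * w f := mul_le_mul_of_nonneg_right (hj0 j) (hw f).le
          _ ≤ _ := F_ge w c π hw hc s f j
      · rw [sa]
        have e : F w c π s a ja = c ja * (w a + if ja = j0 then w f else 0) := by
          rw [F_eval3 w c π hU hfa hfb hab]
          rcases eq_or_ne ja j0 with h | h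
          · subst h
            simp [sf, sb, hfa, Ne.symm hab, hnejb, hpa]
            exact Or.inl (add_comm _ _)
          · simp [sf, sb, hfa, Ne.symm hab, hnejb, h, Ne.symm h]
        rw [e]
        refine le_trans (hja j) ?_
        rw [F_eval3 w c π hU hfa hfb hab]
        rcases eq_or_ne j j0 with rfl | h
        · simp [sf, hfa, hpa]
          split_ifs <;> nlinarith [hc j, hw b, hw a, hw f]
        · simp [sf, hfa, h, Ne.symm h]
          split_ifs <;> nlinarith [hc j, hw b, hw a]
      · rw [sb]
        have e : F w c π s b jb = c jb * (w b + if jb = j0 then w f else 0) := by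
          rw [F_eval3 w c π hU hfa hfb hab]
          rcases eq_or_ne jb j0 with h | h
          · subst h
            simp [sf, sa, hfb, hab, Ne.symm hnejb, hpb]
            exact Or.inl (add_comm _ _)
          · simp [sf, sa, hfb, hab, Ne.symm hnejb, h, Ne.symm h]
        rw [e]
        refine le_trans (hjb j) ?_
        rw [F_eval3 w c π hU hfa hfb hab]
        rcases eq_or_ne j j0 with rfl | h
        · simp [sf, hfb, hpb]
          split_ifs <;> nlinarith [hc j, hw b, hw a, hw f]
        · simp [sf, hfb, h, Ne.symm h]
          split_ifs <;> nlinarith [hc j, hw b, hw a]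
    · -- case 2 : ja minimizes both
      push_neg at hcase
      obtain ⟨jb0, -, hjb0'⟩ := Finset.exists_min_image Finset.univ
        (fun j => c j * (w b + if j = j0 then w f else 0)) ⟨j0, Finset.mem_univ _⟩
      have hjbmin0 : ∀ j, c jb0 * (w b + if jb0 = j0 then w f else 0) ≤
          c j * (w b + if j = j0 then w f else 0) := fun j => hjb0' j (Finset.mem_univ j)
      have heq : jb0 = ja := hcase jb0 hjbmin0
      rw [heq] at hjbmin0
      have hne' : π ja a ≠ π ja b := fun h => hab (hinj ja h)
      rcases hne'.lt_or_gt with hfr | hfr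
      · -- a is ahead of b on ja
        obtain ⟨jy, -, hjy'⟩ := Finset.exists_min_image Finset.univ
          (fun j => c j * ((w b + if j = j0 then w f else 0) + (if j = ja then w a else 0)))
          ⟨j0, Finset.mem_univ _⟩
        have hjy : ∀ j, c jy * ((w b + if jy = j0 then w f else 0) +
            (if jy = ja then w a else 0)) ≤
            c j * ((w b + if j = j0 then w f else 0) + (if j = ja then w a else 0)) :=
          fun j => hjy' j (Finset.mem_univ j)
        obtain ⟨s, sf, sa, sb⟩ : ∃ s : Fin 3 → Fin m, s f = j0 ∧ s a = ja ∧ s b = jy :=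
          ⟨fun i => if i = f then j0 else if i = a then ja else jy,
            by simp, by simp [haf], by simp [hbf, Ne.symm hab]⟩
        refine ⟨s, ne_crit w c π hinj s fun i j => ?_⟩
        have hi : f = i ∨ a = i ∨ b = i := by
          have hx := Finset.mem_univ i; rw [hU] at hx; simp at hx
          rcases hx with h | h | h
          · exact Or.inl h.symm
          · exact Or.inr (Or.inl h.symm)
          · exact Or.inr (Or.inr h.symm)
        rcases hi with rfl | rfl | rfl
        · rw [sf]
          have e : F w c π s f j0 = c j0 * w f := by
            rw [F_eval3 w c π hU hfa hfb hab]
            simp [sa, sb, haf, hbf, not_lt.mpr (hf a), not_lt.mpr (hf b)]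
          rw [e]
          calc c j0 * w f ≤ c j * w f := mul_le_mul_of_nonneg_right (hj0 j) (hw f).le
            _ ≤ _ := F_ge w c π hw hc s f j
        · rw [sa]
          have e : F w c π s a ja = c ja * (w a + if ja = j0 then w f else 0) := by
            rw [F_eval3 w c π hU hfa hfb hab]
            rcases eq_or_ne ja j0 with h | h
            · subst h
              simp [sf, sb, hfa, Ne.symm hab, not_lt.mpr hfr.le, hpa]
              exact Or.inl (add_comm _ _)
            · simp [sf, sb, hfa, Ne.symm hab, not_lt.mpr hfr.le, h, Ne.symm h]
          rw [e]
          refine le_trans (hja j) ?_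
          rw [F_eval3 w c π hU hfa hfb hab]
          rcases eq_or_ne j j0 with rfl | h
          · simp [sf, hfa, hpa]
            split_ifs <;> nlinarith [hc j, hw b, hw a, hw f]
          · simp [sf, hfa, h, Ne.symm h]
            split_ifs <;> nlinarith [hc j, hw b, hw a]
        · rw [sb]
          have e2 : ∀ j', F w c π s b j' =
              c j' * ((w b + if j' = j0 then w f else 0) + (if j' = ja then w a else 0)) := by
            intro j'
            rw [F_eval3 w c π hU hfa hfb hab]
            have hTf : (if f = b ∨ (s f = j' ∧ π j' f < π j' b) then w f else 0)
                = (if j' = j0 then w f else 0) := by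
              by_cases h1 : j' = j0
              · rw [if_pos (Or.inr ⟨by rw [sf, h1], by rw [h1]; exact hpb⟩), if_pos h1]
              · rw [if_neg, if_neg h1]
                rintro (h | ⟨hs, -⟩)
                · exact hfb h
                · exact h1 (hs.symm.trans sf)
            have hTa : (if a = b ∨ (s a = j' ∧ π j' a < π j' b) then w a else 0)
                = (if j' = ja then w a else 0) := by
              by_cases h2 : j' = ja
              · rw [if_pos (Or.inr ⟨by rw [sa, h2], by rw [h2]; exact hfr⟩), if_pos h2]
              · rw [if_neg, if_neg h2]
                rintro (h | ⟨hs, -⟩)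
                · exact hab h
                · exact h2 (hs.symm.trans sa)
            have hTb : (if b = b ∨ (s b = j' ∧ π j' b < π j' b) then w b else 0) = w b :=
              if_pos (Or.inl rfl)
            rw [hTf, hTa, hTb]
            ring
          rw [e2 jy, e2 j]
          exact hjy j
      · -- b is ahead of a on ja
        obtain ⟨jy, -, hjy'⟩ := Finset.exists_min_image Finset.univ
          (fun j => c j * ((w a + if j = j0 then w f else 0) + (if j = ja then w b else 0)))
          ⟨j0, Finset.mem_univ _⟩
        have hjy : ∀ j, c jy * ((w a + if jy = j0 then w f else 0) +
            (if jy = ja then w b else 0)) ≤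
            c j * ((w a + if j = j0 then w f else 0) + (if j = ja then w b else 0)) :=
          fun j => hjy' j (Finset.mem_univ j)
        obtain ⟨s, sf, sa, sb⟩ : ∃ s : Fin 3 → Fin m, s f = j0 ∧ s a = jy ∧ s b = ja :=
          ⟨fun i => if i = f then j0 else if i = a then jy else ja,
            by simp, by simp [haf], by simp [hbf, Ne.symm hab]⟩
        refine ⟨s, ne_crit w c π hinj s fun i j => ?_⟩
        have hi : f = i ∨ a = i ∨ b = i := by
          have hx := Finset.mem_univ i; rw [hU] at hx; simp at hx
          rcases hx with h | h | h
          · exact Or.inl h.symm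
          · exact Or.inr (Or.inl h.symm)
          · exact Or.inr (Or.inr h.symm)
        rcases hi with rfl | rfl | rfl
        · rw [sf]
          have e : F w c π s f j0 = c j0 * w f := by
            rw [F_eval3 w c π hU hfa hfb hab]
            simp [sa, sb, haf, hbf, not_lt.mpr (hf a), not_lt.mpr (hf b)]
          rw [e]
          calc c j0 * w f ≤ c j * w f := mul_le_mul_of_nonneg_right (hj0 j) (hw f).le
            _ ≤ _ := F_ge w c π hw hc s f j
        · rw [sa]
          have e2 : ∀ j', F w c π s a j' =
              c j' * ((w a + if j' = j0 then w f else 0) + (if j' = ja then w b else 0)) := by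
            intro j'
            rw [F_eval3 w c π hU hfa hfb hab]
            have hTf : (if f = a ∨ (s f = j' ∧ π j' f < π j' a) then w f else 0)
                = (if j' = j0 then w f else 0) := by
              by_cases h1 : j' = j0
              · rw [if_pos (Or.inr ⟨by rw [sf, h1], by rw [h1]; exact hpa⟩), if_pos h1]
              · rw [if_neg, if_neg h1]
                rintro (h | ⟨hs, -⟩)
                · exact hfa h
                · exact h1 (hs.symm.trans sf)
            have hTb : (if b = a ∨ (s b = j' ∧ π j' b < π j' a) then w b else 0)
                = (if j' = ja then w b else 0) := by
              by_cases h2 : j' = ja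
              · rw [if_pos (Or.inr ⟨by rw [sb, h2], by rw [h2]; exact hfr⟩), if_pos h2]
              · rw [if_neg, if_neg h2]
                rintro (h | ⟨hs, -⟩)
                · exact hab h.symm
                · exact h2 (hs.symm.trans sb)
            have hTa : (if a = a ∨ (s a = j' ∧ π j' a < π j' a) then w a else 0) = w a :=
              if_pos (Or.inl rfl)
            rw [hTf, hTa, hTb]
            ring
          rw [e2 jy, e2 j]
          exact hjy j
        · rw [sb]
          have e : F w c π s b ja = c ja * (w b + if ja = j0 then w f else 0) := by
            rw [F_eval3 w c π hU hfa hfb hab]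
            rcases eq_or_ne ja j0 with h | h
            · subst h
              simp [sf, sa, hfb, hab, not_lt.mpr hfr.le, hpb]
              exact Or.inl (add_comm _ _)
            · simp [sf, sa, hfb, hab, not_lt.mpr hfr.le, h, Ne.symm h]
          rw [e]
          refine le_trans (hjbmin0 j) ?_
          rw [F_eval3 w c π hU hfa hfb hab]
          rcases eq_or_ne j j0 with rfl | h
          · simp [sf, hfb, hpb]
            split_ifs <;> nlinarith [hc j, hw b, hw a, hw f]
          · simp [sf, hfb, h, Ne.symm h]
            split_ifs <;> nlinarith [hc j, hw b, hw a]
end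

section
/- In every scheduling game where all machines have the same priority list (a global priority list), a pure Nash equilibrium exists, obtained by greedily assigning jobs in priority order, each to a machine minimizing its resulting completion time. -/
noncomputable def greedy {n m : ℕ} (hm : 0 < m) (v : Fin n → ℝ) (c : Fin m → ℝ) :
    Fin n → Fin m
  | k =>
    (Finset.exists_min_image Finset.univ
      (fun j => c j * (v k + ∑ x ∈ (Finset.univ.filter (fun k' : Fin n => k' < k)).attach,
        if greedy hm v c x.1 = j then v x.1 else 0))
      ⟨⟨0, hm⟩, Finset.mem_univ _⟩).choose
termination_by k => k.val
decreasing_by all_goals exact (Finset.mem_filter.mp x.2).2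

noncomputable def gload {n m : ℕ} (hm : 0 < m) (v : Fin n → ℝ) (c : Fin m → ℝ)
    (k : Fin n) (j : Fin m) : ℝ :=
  ∑ k' : Fin n, if greedy hm v c k' = j ∧ k' < k then v k' else 0

lemma gload_eq {n m : ℕ} (hm : 0 < m) (v : Fin n → ℝ) (c : Fin m → ℝ) (k : Fin n) (j : Fin m) :
    (∑ x ∈ (Finset.univ.filter (fun k' : Fin n => k' < k)).attach,
        if greedy hm v c x.1 = j then v x.1 else 0) = gload hm v c k j := by
  rw [Finset.sum_attach _ (fun k' => if greedy hm v c k' = j then v k' else 0),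
    Finset.sum_filter, gload]
  refine Finset.sum_congr rfl fun k' _ => ?_
  split_ifs <;> tauto

lemma greedy_min {n m : ℕ} (hm : 0 < m) (v : Fin n → ℝ) (c : Fin m → ℝ) (k : Fin n) (j : Fin m) :
    c (greedy hm v c k) * (v k + gload hm v c k (greedy hm v c k)) ≤
    c j * (v k + gload hm v c k j) := by
  have hdef : greedy hm v c k = (Finset.exists_min_image Finset.univ
      (fun j => c j * (v k + ∑ x ∈ (Finset.univ.filter (fun k' : Fin n => k' < k)).attach,
        if greedy hm v c x.1 = j then v x.1 else 0))
      ⟨⟨0, hm⟩, Finset.mem_univ _⟩).choose := by rw [greedy]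
  have hspec := (Finset.exists_min_image Finset.univ
      (fun j => c j * (v k + ∑ x ∈ (Finset.univ.filter (fun k' : Fin n => k' < k)).attach,
        if greedy hm v c x.1 = j then v x.1 else 0))
      ⟨⟨0, hm⟩, Finset.mem_univ _⟩).choose_spec.2 j (Finset.mem_univ j)
  rw [← hdef, gload_eq, gload_eq] at hspec
  exact hspec

theorem stmt4' {n m : ℕ} (hm : 0 < m)
    (w : Fin n → ℝ) (hw : ∀ i, 0 < w i)
    (c : Fin m → ℝ) (hc : ∀ j, 0 < c j)
    (π : Fin n → Fin n) (hπ : Function.Bijective π) :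
    ∃ s : Fin n → Fin m,
      ∀ i j, (c (s i) * ∑ i' ∈ Finset.univ.filter
          (fun i' => s i' = s i ∧ π i' ≤ π i), w i') ≤
        c ((Function.update s i j) i) * ∑ i' ∈ Finset.univ.filter
          (fun i' => (Function.update s i j) i' = (Function.update s i j) i ∧ π i' ≤ π i), w i' := by
  set e : Fin n ≃ Fin n := Equiv.ofBijective π hπ with he
  have heπ : ∀ i, e i = π i := fun i => rfl
  set v : Fin n → ℝ := fun k => w (e.symm k) with hv
  refine ⟨fun i => greedy hm v c (π i), fun i j => ?_⟩
  set s : Fin n → Fin m := fun i => greedy hm v c (π i) with hs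
  have hvK : v (π i) = w i := by rw [hv]; simp [← heπ]
  have hupd : (Function.update s i j) i = j := Function.update_self i j s
  rw [hupd]
  have hA : (∑ i' ∈ Finset.univ.filter (fun i' => s i' = s i ∧ π i' ≤ π i), w i')
      = w i + gload hm v c (π i) (s i) := by
    rw [Finset.sum_filter]
    have step : ∀ i' : Fin n,
        (if s i' = s i ∧ π i' ≤ π i then w i' else 0)
        = (if π i' = π i then w i else 0)
          + (if greedy hm v c (π i') = s i ∧ π i' < π i then v (π i') else 0) := by
      intro i'
      have hvi' : v (π i') = w i' := by rw [hv]; simp [← heπ]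
      by_cases hi : π i' = π i
      · have : i' = i := hπ.1 hi
        subst this
        simp [lt_irrefl]
      · have hne : ¬ (π i' = π i) := hi
        simp only [if_neg hne, zero_add, hvi']
        refine if_congr ?_ rfl rfl
        constructor
        · rintro ⟨h1, h2⟩; exact ⟨h1, lt_of_le_of_ne h2 hne⟩
        · rintro ⟨h1, h2⟩; exact ⟨h1, le_of_lt h2⟩
    rw [Finset.sum_congr rfl (fun i' _ => step i'), Finset.sum_add_distrib]
    congr 1
    · rw [Finset.sum_eq_single i (fun b _ hb => if_neg (fun h => hb (hπ.1 h)))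
        (fun h => absurd (Finset.mem_univ i) h)]
      simp
    · rw [gload]
      exact Fintype.sum_bijective π hπ _ _ (fun i' => rfl)
  have hB : (∑ i' ∈ Finset.univ.filter
        (fun i' => (Function.update s i j) i' = j ∧ π i' ≤ π i), w i')
      = w i + gload hm v c (π i) j := by
    rw [Finset.sum_filter]
    have step : ∀ i' : Fin n,
        (if (Function.update s i j) i' = j ∧ π i' ≤ π i then w i' else 0)
        = (if π i' = π i then w i else 0)
          + (if greedy hm v c (π i') = j ∧ π i' < π i then v (π i') else 0) := by
      intro i'
      have hvi' : v (π i') = w i' := by rw [hv]; simp [← heπ]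
      by_cases hi : π i' = π i
      · have : i' = i := hπ.1 hi
        subst this
        simp [lt_irrefl, hupd]
      · have hii : i' ≠ i := fun h => hi (by rw [h])
        rw [Function.update_of_ne hii]
        simp only [if_neg hi, zero_add, hvi']
        refine if_congr ?_ rfl rfl
        constructor
        · rintro ⟨h1, h2⟩; exact ⟨h1, lt_of_le_of_ne h2 hi⟩
        · rintro ⟨h1, h2⟩; exact ⟨h1, le_of_lt h2⟩
    rw [Finset.sum_congr rfl (fun i' _ => step i'), Finset.sum_add_distrib]
    congr 1
    · rw [Finset.sum_eq_single i (fun b _ hb => if_neg (fun h => hb (hπ.1 h)))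
        (fun h => absurd (Finset.mem_univ i) h)]
      simp
    · rw [gload]
      exact Fintype.sum_bijective π hπ _ _ (fun i' => rfl)
  rw [hA, hB, ← hvK]
  exact greedy_min hm v c (π i) j


/-- Every scheduling game in which all machines share one global priority list
has a pure Nash equilibrium. -/
theorem stmt4 {n m : ℕ} (hm : 0 < m)
    (w : Fin n → ℝ) (hw : ∀ i, 0 < w i)
    (c : Fin m → ℝ) (hc : ∀ j, 0 < c j)
    (π : Fin n → Fin n) (hπ : Function.Bijective π) :
    ∃ s : Fin n → Fin m, schedNE w c (fun _ => π) s := by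
  obtain ⟨s, hsne⟩ := stmt4' hm w hw c hc π hπ
  exact ⟨s, fun i j => by simpa [schedCost, schedNE] using hsne i j⟩
end

section
/- In every scheduling game with unit-weight jobs (w_i = 1 for all i) and arbitrary machine delays and priority lists, every pure Nash equilibrium achieves the minimum possible makespan, i.e., the price of anarchy with respect to makespan is 1. -/
open Finset

lemma cost_eq_card {n m : ℕ} (c : Fin m → ℝ) (π : Fin m → Fin n → Fin n)
    (s : Fin n → Fin m) (i : Fin n) :
    schedCost (fun _ => (1:ℝ)) c π s i
      = c (s i) * (univ.filter (fun i' => s i' = s i ∧ π (s i) i' ≤ π (s i) i)).card := by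
  simp [schedCost]

/-- With unit-weight jobs, every pure Nash equilibrium minimizes the makespan (PoA = 1). -/
theorem stmt5 {n m : ℕ} (hn : 0 < n) (hm : 0 < m)
    (c : Fin m → ℝ) (hc : ∀ j, 0 < c j)
    (π : Fin m → Fin n → Fin n) (hπ : ∀ j, Function.Bijective (π j))
    (s : Fin n → Fin m) (hs : schedNE (fun _ => (1:ℝ)) c π s)
    (t : Fin n → Fin m) :
    makespan (fun _ => (1:ℝ)) c π s ≤ makespan (fun _ => (1:ℝ)) c π t := by
  have hne : Nonempty (Fin n) := ⟨⟨0, hn⟩⟩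
  set w : Fin n → ℝ := fun _ => (1:ℝ) with hw
  have hbddT : BddAbove (Set.range (schedCost w c π t)) := (Set.finite_range _).bddAbove
  have hcost_nonneg : ∀ (u : Fin n → Fin m) i, 0 ≤ schedCost w c π u i := by
    intro u i
    rw [cost_eq_card]
    exact mul_nonneg (hc _).le (Nat.cast_nonneg _)
  by_contra hlt
  push_neg at hlt
  -- job attaining the makespan of s
  obtain ⟨i0, hi0⟩ := Finite.exists_max (schedCost w c π s)
  have hms : makespan w c π s = schedCost w c π s i0 :=
    le_antisymm (ciSup_le hi0) (le_ciSup ((Set.finite_range _).bddAbove) i0)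
  set j0 := s i0 with hj0
  set L := schedCost w c π s i0 with hLdef
  set loadS : Fin m → ℕ := fun j => (univ.filter fun i => s i = j).card with hloadS
  set loadT : Fin m → ℕ := fun j => (univ.filter fun i => t i = j).card with hloadT
  -- every machine's load in t is bounded: c j * loadT j ≤ makespan t
  have key1 : ∀ j, (c j) * (loadT j : ℝ) ≤ makespan w c π t := by
    intro j
    rcases Nat.eq_zero_or_pos (loadT j) with h0 | hpos
    · rw [h0]
      simp only [Nat.cast_zero, mul_zero]
      exact le_trans (hcost_nonneg t i0) (le_ciSup hbddT i0)
    · have hnonempty : (univ.filter fun i => t i = j).Nonempty := card_pos.mp hpos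
      obtain ⟨i1, hi1mem, hi1max⟩ := Finset.exists_max_image _ (π j) hnonempty
      have hti1 : t i1 = j := (mem_filter.mp hi1mem).2
      have hset : (univ.filter (fun i' => t i' = t i1 ∧ π (t i1) i' ≤ π (t i1) i1))
          = (univ.filter fun i => t i = j) := by
        ext i'
        simp only [mem_filter, mem_univ, true_and, hti1]
        constructor
        · rintro ⟨h1, _⟩; exact h1
        · intro h1; exact ⟨h1, hi1max i' (mem_filter.mpr ⟨mem_univ _, h1⟩)⟩
      have := cost_eq_card c π t i1
      rw [hset, hti1] at this
      calc c j * (loadT j : ℝ) = schedCost w c π t i1 := this.symm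
        _ ≤ makespan w c π t := le_ciSup hbddT i1
  have key1' : ∀ j, (c j) * (loadT j : ℝ) < L := by
    intro j
    calc (c j) * (loadT j : ℝ) ≤ makespan w c π t := key1 j
      _ < makespan w c π s := hlt
      _ = L := hms
  set k := (univ.filter (fun i' => s i' = j0 ∧ π j0 i' ≤ π j0 i0)).card with hk
  have hL : L = c j0 * (k : ℝ) := cost_eq_card c π s i0
  have hk_le : k ≤ loadS j0 := by
    apply card_le_card
    intro i' hi'
    exact mem_filter.mpr ⟨mem_univ _, (mem_filter.mp hi').2.1⟩
  -- NE lower bound on loads of s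
  have key2 : ∀ j, j ≠ j0 → L ≤ c j * ((loadS j : ℝ) + 1) := by
    intro j hjne
    have h1 := hs i0 j
    have hupd : Function.update s i0 j i0 = j := Function.update_self i0 j s
    have h2 : schedCost w c π (Function.update s i0 j) i0
        = c j * ((univ.filter (fun i' => Function.update s i0 j i' = j ∧
            π j i' ≤ π j i0)).card : ℝ) := by
      rw [cost_eq_card, hupd]
    have hsub : (univ.filter (fun i' => Function.update s i0 j i' = j ∧ π j i' ≤ π j i0))
        ⊆ insert i0 (univ.filter fun i => s i = j) := by
      intro i' hi'
      obtain ⟨h1', _⟩ := (mem_filter.mp hi').2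
      by_cases hii : i' = i0
      · rw [hii]; exact mem_insert_self _ _
      · rw [Function.update_of_ne hii] at h1'
        exact mem_insert_of_mem (mem_filter.mpr ⟨mem_univ _, h1'⟩)
    have hcard : (univ.filter (fun i' => Function.update s i0 j i' = j ∧
        π j i' ≤ π j i0)).card ≤ loadS j + 1 := by
      calc _ ≤ (insert i0 (univ.filter fun i => s i = j)).card := card_le_card hsub
        _ ≤ loadS j + 1 := card_insert_le _ _
    calc L ≤ schedCost w c π (Function.update s i0 j) i0 := h1
      _ = c j * ((univ.filter (fun i' => Function.update s i0 j i' = j ∧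
            π j i' ≤ π j i0)).card : ℝ) := h2
      _ ≤ c j * ((loadS j : ℝ) + 1) := by
          apply mul_le_mul_of_nonneg_left _ (hc j).le
          exact_mod_cast hcard
  -- strict inequality at j0
  have hstrict : loadT j0 < loadS j0 := by
    have : c j0 * (loadT j0 : ℝ) < c j0 * (k : ℝ) := by rw [← hL]; exact key1' j0
    have hlt' : (loadT j0 : ℝ) < (k : ℝ) := lt_of_mul_lt_mul_left this (hc j0).le
    have : loadT j0 < k := by exact_mod_cast hlt'
    omega
  -- weak inequality elsewhere
  have hle : ∀ j ∈ univ, loadT j ≤ loadS j := by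
    intro j _
    by_cases hjne : j = j0
    · subst hjne; exact hstrict.le
    · have : c j * (loadT j : ℝ) < c j * ((loadS j : ℝ) + 1) :=
        lt_of_lt_of_le (key1' j) (key2 j hjne)
      have hlt' : (loadT j : ℝ) < (loadS j : ℝ) + 1 := lt_of_mul_lt_mul_left this (hc j).le
      have : loadT j < loadS j + 1 := by exact_mod_cast hlt'
      omega
  have hsumT : ∑ j, loadT j = n := by
    have := Finset.card_eq_sum_card_fiberwise (fun i (_ : i ∈ univ) => mem_univ (t i))
    simpa [hloadT] using this.symm
  have hsumS : ∑ j, loadS j = n := by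
    have := Finset.card_eq_sum_card_fiberwise (fun i (_ : i ∈ univ) => mem_univ (s i))
    simpa [hloadS] using this.symm
  have : ∑ j, loadT j < ∑ j, loadS j :=
    Finset.sum_lt_sum hle ⟨j0, mem_univ j0, hstrict⟩
  omega
end

section
/- In every scheduling game with unit-weight jobs, every pure Nash equilibrium achieves the minimum possible sum of completion times, i.e., the price of anarchy with respect to the sum of completion times is 1. -/
/-- triangular number 1+2+...+k -/
def trif (k : ℕ) : ℕ := ∑ r ∈ Finset.range k, (r + 1)

lemma trif_succ (k : ℕ) : trif (k + 1) = trif k + (k + 1) := Finset.sum_range_succ _ _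

def load {n m : ℕ} (s : Fin n → Fin m) (j : Fin m) : ℕ :=
  (Finset.univ.filter (fun i => s i = j)).card

lemma load_sum {n m : ℕ} (s : Fin n → Fin m) : ∑ j, load s j = n := by
  classical
  have := Finset.card_eq_sum_card_fiberwise
    (f := s) (s := (Finset.univ : Finset (Fin n))) (t := (Finset.univ : Finset (Fin m)))
    (fun a _ => Finset.mem_univ _)
  simpa [load, Finset.card_univ] using this.symm

lemma rank_sum {n : ℕ} (f : Fin n → Fin n) (hf : Function.Injective f) :
    ∀ (k : ℕ) (S : Finset (Fin n)), S.card = k →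
      ∑ i ∈ S, (S.filter (fun i' => f i' ≤ f i)).card = trif k := by
  intro k
  induction k with
  | zero =>
    intro S hS
    rw [Finset.card_eq_zero] at hS
    simp [hS, trif]
  | succ k ih =>
    intro S hS
    have hSne : S.Nonempty := Finset.card_pos.mp (by omega)
    obtain ⟨i0, hi0, hmax⟩ := S.exists_max_image f hSne
    have h0 : S.filter (fun i' => f i' ≤ f i0) = S :=
      Finset.filter_eq_self.mpr (fun i hi => hmax i hi)
    have hnot : ∀ i ∈ S.erase i0,
        S.filter (fun i' => f i' ≤ f i) = (S.erase i0).filter (fun i' => f i' ≤ f i) := by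
      intro i hi
      have hine : i ≠ i0 := (Finset.mem_erase.mp hi).1
      have hiS : i ∈ S := (Finset.mem_erase.mp hi).2
      rw [Finset.filter_erase]
      rw [Finset.erase_eq_of_notMem]
      intro hmem
      have h1 : f i0 ≤ f i := (Finset.mem_filter.mp hmem).2
      have h2 : f i ≤ f i0 := hmax i hiS
      exact hine (hf (le_antisymm h2 h1))
    have hcard : (S.erase i0).card = k := by
      rw [Finset.card_erase_of_mem hi0, hS]; omega
    calc ∑ i ∈ S, (S.filter (fun i' => f i' ≤ f i)).card
        = (S.filter (fun i' => f i' ≤ f i0)).card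
          + ∑ i ∈ S.erase i0, (S.filter (fun i' => f i' ≤ f i)).card :=
          (Finset.add_sum_erase S (fun i => (S.filter (fun i' => f i' ≤ f i)).card) hi0).symm
      _ = (k + 1) + ∑ i ∈ S.erase i0, ((S.erase i0).filter (fun i' => f i' ≤ f i)).card := by
          rw [h0, hS]
          exact congrArg (fun x => (k + 1) + x)
            (Finset.sum_congr rfl (fun i hi => congrArg Finset.card (hnot i hi)))
      _ = (k + 1) + trif k := by rw [ih (S.erase i0) hcard]
      _ = trif (k + 1) := by rw [trif_succ]; omega

lemma cost_sum {n m : ℕ} (c : Fin m → ℝ) (π : Fin m → Fin n → Fin n)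
    (hπ : ∀ j, Function.Bijective (π j)) (s : Fin n → Fin m) :
    ∑ i, schedCost (fun _ => (1:ℝ)) c π s i = ∑ j, c j * (trif (load s j) : ℝ) := by
  classical
  rw [← Finset.sum_fiberwise_of_maps_to (g := s) (t := (Finset.univ : Finset (Fin m)))
      (fun i _ => Finset.mem_univ (s i)) (fun i => schedCost (fun _ => (1:ℝ)) c π s i)]
  apply Finset.sum_congr rfl
  intro j _
  have hterm : ∀ i ∈ Finset.univ.filter (fun i => s i = j),
      schedCost (fun _ => (1:ℝ)) c π s i
        = c j * (((Finset.univ.filter (fun i => s i = j)).filter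
            (fun i' => π j i' ≤ π j i)).card : ℝ) := by
    intro i hi
    have hsi : s i = j := (Finset.mem_filter.mp hi).2
    rw [schedCost, hsi, Finset.filter_filter]
    simp
  rw [Finset.sum_congr rfl hterm, ← Finset.mul_sum]
  congr 1
  rw [← Nat.cast_sum]
  congr 1
  exact rank_sum (π j) (hπ j).injective (load s j) _ rfl

lemma key_ineq {n m : ℕ} (c : Fin m → ℝ) (hc : ∀ j, 0 < c j)
    (π : Fin m → Fin n → Fin n) (hπ : ∀ j, Function.Bijective (π j))
    (s : Fin n → Fin m) (hs : schedNE (fun _ => (1:ℝ)) c π s) :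
    ∀ j j', 0 < load s j → c j * (load s j : ℝ) ≤ c j' * ((load s j' : ℝ) + 1) := by
  classical
  intro j j' hpos
  by_cases hjj : j = j'
  · subst hjj
    have : (0:ℝ) ≤ c j := (hc j).le
    nlinarith
  · -- pick the last job on machine j
    set S : Finset (Fin n) := Finset.univ.filter (fun i => s i = j) with hS
    have hSne : S.Nonempty := Finset.card_pos.mp hpos
    obtain ⟨i0, hi0, hmax⟩ := S.exists_max_image (π j) hSne
    have hsi0 : s i0 = j := (Finset.mem_filter.mp hi0).2
    -- cost of i0 in s
    have hcost : schedCost (fun _ => (1:ℝ)) c π s i0 = c j * (load s j : ℝ) := by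
      rw [schedCost, hsi0]
      have : Finset.univ.filter (fun i' => s i' = j ∧ π j i' ≤ π j i0) = S := by
        apply Finset.ext
        intro i
        simp only [Finset.mem_filter, Finset.mem_univ, true_and, hS]
        constructor
        · exact fun h => h.1
        · exact fun h => ⟨h, hmax i (by simp [hS, h])⟩
      rw [this]
      simp [load, hS]
    -- cost of i0 after deviating to j'
    have hdev := hs i0 j'
    rw [hcost] at hdev
    have hupd : Function.update s i0 j' i0 = j' := Function.update_self _ _ _
    have hsub : Finset.univ.filter
        (fun i' => Function.update s i0 j' i' = j' ∧ π j' i' ≤ π j' i0)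
        ⊆ insert i0 (Finset.univ.filter (fun i => s i = j')) := by
      intro i hi
      simp only [Finset.mem_filter, Finset.mem_univ, true_and] at hi
      by_cases hii : i = i0
      · simp [hii]
      · rw [Function.update_of_ne hii] at hi
        simp [hi.1]
    have hcard : (Finset.univ.filter
        (fun i' => Function.update s i0 j' i' = j' ∧ π j' i' ≤ π j' i0)).card
        ≤ load s j' + 1 := by
      calc _ ≤ (insert i0 (Finset.univ.filter (fun i => s i = j'))).card :=
            Finset.card_le_card hsub
        _ ≤ load s j' + 1 := by
            rw [load]; exact Finset.card_insert_le _ _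
    have hdev2 : schedCost (fun _ => (1:ℝ)) c π (Function.update s i0 j') i0
        ≤ c j' * ((load s j' : ℝ) + 1) := by
      rw [schedCost, hupd]
      simp only [Finset.sum_const, nsmul_eq_mul, mul_one]
      apply mul_le_mul_of_nonneg_left _ (hc j').le
      have := hcard
      exact_mod_cast this
    exact le_trans hdev hdev2

lemma sum_split {m : ℕ} {R : Type*} [AddCommMonoid R] (f : Fin m → R) (j0 j1 : Fin m)
    (h : j0 ≠ j1) :
    ∑ j, f j = f j0 + (f j1 + ∑ j ∈ (Finset.univ.erase j0).erase j1, f j) := by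
  rw [← Finset.add_sum_erase _ f (Finset.mem_univ j0)]
  rw [← Finset.add_sum_erase _ f (Finset.mem_erase.mpr ⟨h.symm, Finset.mem_univ j1⟩)]

lemma exch {m : ℕ} (c : Fin m → ℝ) (hc : ∀ j, 0 < c j) (a : Fin m → ℕ)
    (key : ∀ j j', 0 < a j → c j * (a j : ℝ) ≤ c j' * ((a j' : ℝ) + 1)) :
    ∀ (N : ℕ) (b : Fin m → ℕ), (∑ j, (b j - a j)) = N → (∑ j, a j) = (∑ j, b j) →
      ∑ j, c j * (trif (a j) : ℝ) ≤ ∑ j, c j * (trif (b j) : ℝ) := by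
  classical
  intro N
  induction N with
  | zero =>
    intro b hN hsum
    have hle : ∀ j, b j ≤ a j := by
      intro j
      have := (Finset.sum_eq_zero_iff.mp hN) j (Finset.mem_univ j)
      omega
    have heq : ∀ j ∈ Finset.univ, b j = a j :=
      (Finset.sum_eq_sum_iff_of_le (fun j _ => hle j)).mp hsum.symm
    apply le_of_eq
    apply Finset.sum_congr rfl
    intro j hj
    rw [heq j hj]
  | succ N ih =>
    intro b hN hsum
    -- find j0 with a j0 < b j0
    have hex0 : ∃ j0, a j0 < b j0 := by
      by_contra h
      push_neg at h
      have : ∑ j, (b j - a j) = 0 := Finset.sum_eq_zero (fun j _ => by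
        have := h j; omega)
      omega
    obtain ⟨j0, hj0⟩ := hex0
    have hex1 : ∃ j1, b j1 < a j1 := by
      by_contra h
      push_neg at h
      have : ∑ j, a j < ∑ j, b j :=
        Finset.sum_lt_sum (fun j _ => h j) ⟨j0, Finset.mem_univ j0, hj0⟩
      omega
    obtain ⟨j1, hj1⟩ := hex1
    have hne : j0 ≠ j1 := by
      intro h; rw [h] at hj0; omega
    set b' : Fin m → ℕ :=
      Function.update (Function.update b j0 (b j0 - 1)) j1 (b j1 + 1) with hb'
    have hb'0 : b' j0 = b j0 - 1 := by
      rw [hb', Function.update_of_ne hne, Function.update_self]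
    have hb'1 : b' j1 = b j1 + 1 := by
      rw [hb', Function.update_self]
    have hb'o : ∀ j, j ≠ j0 → j ≠ j1 → b' j = b j := by
      intro j h0 h1
      rw [hb', Function.update_of_ne h1, Function.update_of_ne h0]
    -- sums over the rest agree
    have hmemrest : ∀ j ∈ (Finset.univ.erase j0).erase j1, b' j = b j := by
      intro j hj
      have h1 : j ≠ j1 := (Finset.mem_erase.mp hj).1
      have h0 : j ≠ j0 := (Finset.mem_erase.mp (Finset.mem_erase.mp hj).2).1
      exact hb'o j h0 h1
    -- sum preservation
    have hsplit_b : ∑ j, b j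
        = b j0 + (b j1 + ∑ j ∈ (Finset.univ.erase j0).erase j1, b j) :=
      sum_split b j0 j1 hne
    have hsplit_b' : ∑ j, b' j
        = b' j0 + (b' j1 + ∑ j ∈ (Finset.univ.erase j0).erase j1, b' j) :=
      sum_split b' j0 j1 hne
    have h3 : ∑ j ∈ (Finset.univ.erase j0).erase j1, b' j
        = ∑ j ∈ (Finset.univ.erase j0).erase j1, b j :=
      Finset.sum_congr rfl hmemrest
    have hsum' : (∑ j, a j) = ∑ j, b' j := by omega
    -- measure decreases
    have hN' : (∑ j, (b' j - a j)) = N := by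
      have e1 : ∑ j, (b' j - a j)
          = (b' j0 - a j0) + ((b' j1 - a j1)
            + ∑ j ∈ (Finset.univ.erase j0).erase j1, (b' j - a j)) :=
        sum_split _ j0 j1 hne
      have e2 : ∑ j, (b j - a j)
          = (b j0 - a j0) + ((b j1 - a j1)
            + ∑ j ∈ (Finset.univ.erase j0).erase j1, (b j - a j)) :=
        sum_split _ j0 j1 hne
      have e3 : ∑ j ∈ (Finset.univ.erase j0).erase j1, (b' j - a j)
          = ∑ j ∈ (Finset.univ.erase j0).erase j1, (b j - a j) :=
        Finset.sum_congr rfl (fun j hj => by rw [hmemrest j hj])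
      rw [e1, e3, hb'0, hb'1]
      rw [e2] at hN
      omega
    -- cost of b' ≤ cost of b
    have hcost : ∑ j, c j * (trif (b' j) : ℝ) ≤ ∑ j, c j * (trif (b j) : ℝ) := by
      rw [sum_split (fun j => c j * (trif (b' j) : ℝ)) j0 j1 hne,
        sum_split (fun j => c j * (trif (b j) : ℝ)) j0 j1 hne]
      have e3 : ∑ j ∈ (Finset.univ.erase j0).erase j1, c j * (trif (b' j) : ℝ)
          = ∑ j ∈ (Finset.univ.erase j0).erase j1, c j * (trif (b j) : ℝ) :=
        Finset.sum_congr rfl (fun j hj => by rw [hmemrest j hj])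
      rw [e3, hb'0, hb'1]
      -- reduce to the two-term inequality
      have hstep : c j1 * ((b j1 : ℝ) + 1) ≤ c j0 * (b j0 : ℝ) := by
        have hk := key j1 j0 (by omega)
        have h1 : c j1 * ((b j1 : ℝ) + 1) ≤ c j1 * (a j1 : ℝ) := by
          apply mul_le_mul_of_nonneg_left _ (hc j1).le
          have : b j1 + 1 ≤ a j1 := by omega
          exact_mod_cast this
        have h2 : c j0 * ((a j0 : ℝ) + 1) ≤ c j0 * (b j0 : ℝ) := by
          apply mul_le_mul_of_nonneg_left _ (hc j0).le
          have : a j0 + 1 ≤ b j0 := by omega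
          exact_mod_cast this
        linarith
      obtain ⟨k, hk0⟩ : ∃ k, b j0 = k + 1 := ⟨b j0 - 1, by omega⟩
      have t0 : (trif (b j0) : ℝ) = (trif (b j0 - 1) : ℝ) + (b j0 : ℝ) := by
        rw [hk0]
        simp only [Nat.add_sub_cancel, trif_succ]
        push_cast
        ring
      have t1 : (trif (b j1 + 1) : ℝ) = (trif (b j1) : ℝ) + ((b j1 : ℝ) + 1) := by
        rw [trif_succ]
        push_cast
        ring
      rw [t1, t0]
      nlinarith [hstep]
    exact le_trans (ih b' hN' hsum') hcost

/-- With unit-weight jobs, every pure Nash equilibrium minimizes the sum of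
completion times (PoA = 1). -/
theorem stmt6 {n m : ℕ} (hn : 0 < n) (hm : 0 < m)
    (c : Fin m → ℝ) (hc : ∀ j, 0 < c j)
    (π : Fin m → Fin n → Fin n) (hπ : ∀ j, Function.Bijective (π j))
    (s : Fin n → Fin m) (hs : schedNE (fun _ => (1:ℝ)) c π s)
    (t : Fin n → Fin m) :
    ∑ i, schedCost (fun _ => (1:ℝ)) c π s i ≤ ∑ i, schedCost (fun _ => (1:ℝ)) c π t i := by
  rw [cost_sum c π hπ s, cost_sum c π hπ t]
  apply exch c hc (load s) (key_ineq c hc π hπ s hs) (∑ j, (load t j - load s j)) (load t) rfl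
  rw [load_sum, load_sum]
end

section
/- Any two pure Nash equilibria of a scheduling game with unit-weight jobs have the same sorted vector of job completion times. -/
namespace SchedAux

open Finset

variable {n m : ℕ}

/-- Load of machine `j`. -/
def load (s : Fin n → Fin m) (j : Fin m) : ℕ := (univ.filter fun i => s i = j).card

/-- Rank of job `i` on its machine. -/
def rnk (π : Fin m → Fin n → Fin n) (s : Fin n → Fin m) (i : Fin n) : ℕ :=
  (univ.filter fun i' => s i' = s i ∧ π (s i) i' ≤ π (s i) i).card

lemma cost_eq_s7 (c : Fin m → ℝ) (π : Fin m → Fin n → Fin n) (s : Fin n → Fin m) (i : Fin n) :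
    schedCost (fun _ => (1:ℝ)) c π s i = c (s i) * (rnk π s i : ℝ) := by
  simp [schedCost, rnk]

lemma one_le_rnk (π : Fin m → Fin n → Fin n) (s : Fin n → Fin m) (i : Fin n) :
    1 ≤ rnk π s i := by
  have : i ∈ univ.filter fun i' => s i' = s i ∧ π (s i) i' ≤ π (s i) i := by
    simp
  exact Finset.card_pos.mpr ⟨i, this⟩

lemma rnk_le_load (π : Fin m → Fin n → Fin n) (s : Fin n → Fin m) (i : Fin n) :
    rnk π s i ≤ load s (s i) := by
  apply Finset.card_le_card
  intro x hx
  simp only [mem_filter, mem_univ, true_and] at hx ⊢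
  exact hx.1

lemma rnk_lt_rnk (π : Fin m → Fin n → Fin n) (hπ : ∀ j, Function.Bijective (π j))
    (s : Fin n → Fin m) {i i' : Fin n} (hss : s i = s i')
    (hlt : π (s i) i < π (s i) i') : rnk π s i < rnk π s i' := by
  apply Finset.card_lt_card
  constructor
  · intro x hx
    simp only [mem_filter, mem_univ, true_and] at hx ⊢
    rw [← hss]
    exact ⟨hx.1, le_of_lt (lt_of_le_of_lt hx.2 (hss ▸ hlt))⟩
  · intro hsub
    have h1 : i' ∈ univ.filter fun x => s x = s i' ∧ π (s i') x ≤ π (s i') i' := by simp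
    have h2 := hsub h1
    simp only [mem_filter, mem_univ, true_and] at h2
    exact absurd h2.2 (not_le.mpr hlt)

lemma rnk_injOn (π : Fin m → Fin n → Fin n) (hπ : ∀ j, Function.Bijective (π j))
    (s : Fin n → Fin m) {i i' : Fin n} (hss : s i = s i')
    (hr : rnk π s i = rnk π s i') : i = i' := by
  rcases lt_trichotomy (π (s i) i) (π (s i) i') with h | h | h
  · exact absurd hr (Nat.ne_of_lt (rnk_lt_rnk π hπ s hss h)).elim
  · exact (hπ (s i)).1 h
  · have := rnk_lt_rnk π hπ s hss.symm (by rw [← hss]; exact h)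
    omega

/-- Ranks on machine `j` cover all of `1..load j`. -/
lemma rnk_surj (π : Fin m → Fin n → Fin n) (hπ : ∀ j, Function.Bijective (π j))
    (s : Fin n → Fin m) (j : Fin m) (r : ℕ) (h1 : 1 ≤ r) (h2 : r ≤ load s j) :
    ∃ i, s i = j ∧ rnk π s i = r := by
  have hsurj := Finset.surj_on_of_inj_on_of_card_le
    (s := univ.filter fun i => s i = j) (t := Finset.Icc 1 (load s j))
    (fun i _ => rnk π s i)
    (fun i hi => by
      simp only [mem_filter, mem_univ, true_and] at hi
      simp only [Finset.mem_Icc]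
      exact ⟨one_le_rnk π s i, hi ▸ rnk_le_load π s i⟩)
    (fun i1 i2 h1 h2 he => by
      simp only [mem_filter, mem_univ, true_and] at h1 h2
      exact rnk_injOn π hπ s (h1.trans h2.symm) he)
    (by rw [Nat.card_Icc]; simp [load])
  obtain ⟨i, hi, he⟩ := hsurj r (Finset.mem_Icc.mpr ⟨h1, h2⟩)
  simp only [mem_filter, mem_univ, true_and] at hi
  exact ⟨i, hi, he.symm⟩

/-- The NE condition gives a uniform bound: each job's cost is at most
`c j * (load j + 1)` for every machine `j`. -/
lemma ne_bound (c : Fin m → ℝ) (hc : ∀ j, 0 < c j) (π : Fin m → Fin n → Fin n)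
    (s : Fin n → Fin m) (hs : schedNE (fun _ => (1:ℝ)) c π s) (i : Fin n) (j : Fin m) :
    schedCost (fun _ => (1:ℝ)) c π s i ≤ c j * (load s j + 1) := by
  refine le_trans (hs i j) ?_
  have hupd : Function.update s i j i = j := Function.update_self i j s
  have : schedCost (fun _ => (1:ℝ)) c π (Function.update s i j) i
      = c j * ((univ.filter fun i' => Function.update s i j i' = j ∧
          π j i' ≤ π j i).card : ℝ) := by
    simp [schedCost, hupd]
  rw [this]
  apply mul_le_mul_of_nonneg_left _ (le_of_lt (hc j))
  have hsub : (univ.filter fun i' => Function.update s i j i' = j ∧ π j i' ≤ π j i)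
      ⊆ insert i (univ.filter fun i' => s i' = j) := by
    intro x hx
    simp only [mem_filter, mem_univ, true_and] at hx
    rcases eq_or_ne x i with h | h
    · simp [h]
    · apply Finset.mem_insert_of_mem
      simp only [mem_filter, mem_univ, true_and]
      rw [Function.update_of_ne h] at hx
      exact hx.1
  have hcard : (univ.filter fun i' => Function.update s i j i' = j ∧ π j i' ≤ π j i).card
      ≤ load s j + 1 := by
    calc _ ≤ (insert i (univ.filter fun i' => s i' = j)).card := Finset.card_le_card hsub
    _ ≤ load s j + 1 := by
        rw [load]
        have := Finset.card_insert_le i (univ.filter fun i' => s i' = j)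
        omega
  calc ((univ.filter fun i' => Function.update s i j i' = j ∧ π j i' ≤ π j i).card : ℝ)
      ≤ ((load s j + 1 : ℕ) : ℝ) := Nat.cast_le.mpr hcard
    _ = (load s j : ℝ) + 1 := by push_cast; ring

end SchedAux

namespace SchedAux

open Finset

variable {n m : ℕ}

/-- Two equal-size sub-multisets of `S` all of whose elements lie below their
complements in `S` are equal. -/
lemma ms_unique : ∀ (k : ℕ) (S A B : Multiset ℝ), A.card = k → B.card = k →
    A ≤ S → B ≤ S →
    (∀ a ∈ A, ∀ b ∈ S - A, a ≤ b) → (∀ b ∈ B, ∀ a ∈ S - B, b ≤ a) → A = B := by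
  intro k
  induction k with
  | zero =>
    intro S A B hA hB _ _ _ _
    rw [Multiset.card_eq_zero] at hA hB; rw [hA, hB]
  | succ k ih =>
    intro S A B hA hB hAS hBS hAp hBp
    have hAne : A ≠ 0 := by intro h; rw [h] at hA; simp at hA
    have hBne : B ≠ 0 := by intro h; rw [h] at hB; simp at hB
    have hSne : S ≠ 0 := by
      intro h; rw [h] at hAS; exact hAne (Multiset.le_zero.mp hAS)
    have hS' : S.toFinset.Nonempty := by
      rw [Multiset.toFinset_nonempty]; exact hSne
    set x := S.toFinset.min' hS' with hxdef
    have hxS : x ∈ S := Multiset.mem_toFinset.mp (S.toFinset.min'_mem hS')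
    have hxmin : ∀ y ∈ S, x ≤ y := fun y hy =>
      S.toFinset.min'_le y (Multiset.mem_toFinset.mpr hy)
    have hmem : ∀ (C : Multiset ℝ), C ≠ 0 → C ≤ S →
        (∀ a ∈ C, ∀ b ∈ S - C, a ≤ b) → x ∈ C := by
      intro C hCne hCS hCp
      by_contra hxC
      obtain ⟨a₀, ha₀⟩ := Multiset.exists_mem_of_ne_zero hCne
      have hxSC : x ∈ S - C := by
        rw [← Multiset.count_pos, Multiset.count_sub]
        have h1 := Multiset.count_pos.mpr hxS
        have h2 := Multiset.count_eq_zero.mpr hxC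
        omega
      have h1 : a₀ ≤ x := hCp a₀ ha₀ x hxSC
      have h2 : x ≤ a₀ := hxmin a₀ (Multiset.mem_of_le hCS ha₀)
      have : a₀ = x := le_antisymm h1 h2
      exact hxC (this ▸ ha₀)
    have hxA : x ∈ A := hmem A hAne hAS hAp
    have hxB : x ∈ B := hmem B hBne hBS hBp
    have hsub : ∀ (C : Multiset ℝ), x ∈ C → C ≤ S → S.erase x - C.erase x = S - C := by
      intro C hxC hCS
      ext y
      rw [Multiset.count_sub, Multiset.count_sub]
      rcases eq_or_ne y x with h | h
      · subst h
        rw [Multiset.count_erase_self, Multiset.count_erase_self]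
        have h1 := Multiset.count_pos.mpr hxC
        have h2 := (Multiset.le_iff_count.mp hCS) x
        omega
      · rw [Multiset.count_erase_of_ne h, Multiset.count_erase_of_ne h]
    have hAB : A.erase x = B.erase x := by
      apply ih (S.erase x)
      · rw [Multiset.card_erase_of_mem hxA, hA]; rfl
      · rw [Multiset.card_erase_of_mem hxB, hB]; rfl
      · exact Multiset.erase_le_erase x hAS
      · exact Multiset.erase_le_erase x hBS
      · intro a ha b hb
        rw [hsub A hxA hAS] at hb
        exact hAp a (Multiset.mem_of_mem_erase ha) b hb
      · intro b hb a ha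
        rw [hsub B hxB hBS] at ha
        exact hBp b (Multiset.mem_of_mem_erase hb) a ha
    calc A = x ::ₘ A.erase x := (Multiset.cons_erase hxA).symm
      _ = x ::ₘ B.erase x := by rw [hAB]
      _ = B := Multiset.cons_erase hxB

/-- Value of slot `(j, k)` (the `k+1`-st position on machine `j`). -/
def slotVal (c : Fin m → ℝ) (p : Fin m × Fin n) : ℝ := c p.1 * ((p.2 : ℕ) + 1)

/-- The set of slots occupied under profile `s`. -/
def used (s : Fin n → Fin m) : Finset (Fin m × Fin n) :=
  univ.filter fun p => (p.2 : ℕ) + 1 ≤ load s p.1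

/-- The multiset of costs is the multiset of used slot values. -/
lemma costs_eq_map (c : Fin m → ℝ) (π : Fin m → Fin n → Fin n)
    (hπ : ∀ j, Function.Bijective (π j)) (s : Fin n → Fin m) :
    Multiset.map (schedCost (fun _ => (1:ℝ)) c π s) (univ : Finset (Fin n)).val
      = Multiset.map (slotVal c) (used s).val := by
  have hrle : ∀ i : Fin n, rnk π s i ≤ n := fun i => by
    calc rnk π s i ≤ (univ : Finset (Fin n)).card :=
          Finset.card_le_card (Finset.filter_subset _ _)
      _ = n := by simp
  set g : Fin n → Fin m × Fin n := fun i =>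
    (s i, ⟨rnk π s i - 1, by have h1 := one_le_rnk π s i; have h2 := hrle i; omega⟩)
    with hg
  have hginj : Function.Injective g := by
    intro i i' h
    simp only [hg, Prod.mk.injEq, Fin.mk.injEq] at h
    apply rnk_injOn π hπ s h.1
    have h1 := one_le_rnk π s i
    have h2 := one_le_rnk π s i'
    omega
  have himg : univ.image g = used s := by
    apply Finset.Subset.antisymm
    · intro p hp
      obtain ⟨i, _, hi⟩ := Finset.mem_image.mp hp
      subst hi
      simp only [used, mem_filter, mem_univ, true_and, hg]
      have h1 := one_le_rnk π s i
      have h2 := rnk_le_load π s i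
      simpa using by omega
    · intro p hp
      simp only [used, mem_filter, mem_univ, true_and] at hp
      obtain ⟨i, hsi, hri⟩ := rnk_surj π hπ s p.1 ((p.2 : ℕ) + 1) (by omega) hp
      apply Finset.mem_image.mpr
      refine ⟨i, mem_univ i, ?_⟩
      simp only [hg]
      refine Prod.ext hsi (Fin.ext ?_)
      show rnk π s i - 1 = (p.2 : ℕ)
      omega
  calc Multiset.map (schedCost (fun _ => (1:ℝ)) c π s) (univ : Finset (Fin n)).val
      = Multiset.map (slotVal c ∘ g) (univ : Finset (Fin n)).val := by
        apply Multiset.map_congr rfl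
        intro i _
        have h1 := one_le_rnk π s i
        rw [cost_eq_s7]
        simp only [Function.comp_apply, slotVal, hg]
        rw [Nat.cast_sub h1]
        push_cast
        ring
    _ = Multiset.map (slotVal c) (Multiset.map g (univ : Finset (Fin n)).val) := by
        rw [Multiset.map_map]
    _ = Multiset.map (slotVal c) (used s).val := by
        rw [← himg, Finset.image_val_of_injOn hginj.injOn]

/-- In a NE, every used slot value is at most every unused slot value. -/
lemma used_le_unused (c : Fin m → ℝ) (hc : ∀ j, 0 < c j) (π : Fin m → Fin n → Fin n)
    (hπ : ∀ j, Function.Bijective (π j)) (s : Fin n → Fin m)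
    (hs : schedNE (fun _ => (1:ℝ)) c π s) :
    ∀ p ∈ used s, ∀ q ∈ ((univ : Finset (Fin m × Fin n)) \ used s),
      slotVal c p ≤ slotVal c q := by
  intro p hp q hq
  simp only [used, mem_filter, mem_univ, true_and] at hp
  rw [Finset.mem_sdiff] at hq
  have hq' : load s q.1 ≤ (q.2 : ℕ) := by
    have := hq.2
    simp only [used, mem_filter, mem_univ, true_and] at this
    omega
  obtain ⟨i, hsi, hri⟩ := rnk_surj π hπ s p.1 (load s p.1) (by omega) le_rfl
  have h1 : slotVal c p ≤ c p.1 * (load s p.1 : ℝ) := by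
    apply mul_le_mul_of_nonneg_left _ (hc p.1).le
    exact_mod_cast hp
  have h2 : c p.1 * (load s p.1 : ℝ) = schedCost (fun _ => (1:ℝ)) c π s i := by
    rw [cost_eq_s7, hsi, hri]
  have h3 := ne_bound c hc π s hs i q.1
  have h4 : c q.1 * ((load s q.1 : ℝ) + 1) ≤ slotVal c q := by
    apply mul_le_mul_of_nonneg_left _ (hc q.1).le
    have : ((load s q.1 : ℕ) : ℝ) ≤ ((q.2 : ℕ) : ℝ) := Nat.cast_le.mpr hq'
    linarith
  linarith

end SchedAux

namespace SchedAux

open Finset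

variable {n m : ℕ}

lemma cost_props (c : Fin m → ℝ) (hc : ∀ j, 0 < c j) (π : Fin m → Fin n → Fin n)
    (hπ : ∀ j, Function.Bijective (π j)) (s : Fin n → Fin m)
    (hs : schedNE (fun _ => (1:ℝ)) c π s) :
    Multiset.map (schedCost (fun _ => (1:ℝ)) c π s) (univ : Finset (Fin n)).val
      ≤ Multiset.map (slotVal c) (univ : Finset (Fin m × Fin n)).val ∧
    ∀ a ∈ Multiset.map (schedCost (fun _ => (1:ℝ)) c π s) (univ : Finset (Fin n)).val,
      ∀ b ∈ Multiset.map (slotVal c) (univ : Finset (Fin m × Fin n)).val -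
        Multiset.map (schedCost (fun _ => (1:ℝ)) c π s) (univ : Finset (Fin n)).val,
      a ≤ b := by
  rw [costs_eq_map c π hπ s]
  have hle : (used s).val ≤ (univ : Finset (Fin m × Fin n)).val :=
    Finset.val_le_iff.mpr (Finset.subset_univ _)
  have hdecomp : Multiset.map (slotVal c) (univ : Finset (Fin m × Fin n)).val
      = Multiset.map (slotVal c) (used s).val
        + Multiset.map (slotVal c) ((univ \ used s) : Finset (Fin m × Fin n)).val := by
    rw [Finset.sdiff_val, ← Multiset.map_add, add_tsub_cancel_of_le hle]
  constructor
  · rw [hdecomp]; exact Multiset.le_add_right _ _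
  · intro a ha b hb
    rw [hdecomp, add_tsub_cancel_left] at hb
    obtain ⟨p, hp, hpa⟩ := Multiset.mem_map.mp ha
    obtain ⟨q, hq, hqb⟩ := Multiset.mem_map.mp hb
    subst hpa; subst hqb
    exact used_le_unused c hc π hπ s hs p hp q hq

end SchedAux

/-- Any two pure Nash equilibria of a unit-weight scheduling game have the same
multiset (sorted vector) of job completion times. -/
theorem stmt7 {n m : ℕ} (hm : 0 < m)
    (c : Fin m → ℝ) (hc : ∀ j, 0 < c j)
    (π : Fin m → Fin n → Fin n) (hπ : ∀ j, Function.Bijective (π j))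
    (s s' : Fin n → Fin m)
    (hs : schedNE (fun _ => (1:ℝ)) c π s) (hs' : schedNE (fun _ => (1:ℝ)) c π s') :
    Multiset.map (schedCost (fun _ => (1:ℝ)) c π s) Finset.univ.val
      = Multiset.map (schedCost (fun _ => (1:ℝ)) c π s') Finset.univ.val := by
  obtain ⟨hAS, hAp⟩ := SchedAux.cost_props c hc π hπ s hs
  obtain ⟨hBS, hBp⟩ := SchedAux.cost_props c hc π hπ s' hs'
  exact SchedAux.ms_unique n _ _ _ (by simp) (by simp) hAS hBS hAp hBp
end

section
/- In a scheduling game on two machines with delays c_1 = 1 and c_2 = c ≥ (√5+1)/2, every pure Nash equilibrium s satisfies makespan(s) ≤ (1 + 1/c) · OPT, where OPT is the minimum makespan over all profiles. -/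
/-- Two machines with delays 1 and c ≥ (√5+1)/2: every NE has makespan at most
(1 + 1/c) times the optimal makespan. -/
theorem stmt8 {n : ℕ} (w : Fin n → ℝ) (hw : ∀ i, 0 < w i)
    (cc : ℝ) (hcc : (Real.sqrt 5 + 1) / 2 ≤ cc)
    (π : Fin 2 → Fin n → Fin n) (hπ : ∀ j, Function.Bijective (π j))
    (s : Fin n → Fin 2) (hs : schedNE w ![1, cc] π s)
    (t : Fin n → Fin 2) :
    makespan w ![1, cc] π s ≤ (1 + 1 / cc) * makespan w ![1, cc] π t := by
  have h5 : (2:ℝ) ≤ Real.sqrt 5 := by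
    nlinarith [Real.sq_sqrt (by norm_num : (5:ℝ) ≥ 0), Real.sqrt_nonneg 5]
  have hc1 : (1:ℝ) ≤ cc := by linarith
  have hc0 : (0:ℝ) < cc := by linarith
  rcases Nat.eq_zero_or_pos n with hn | hn
  · subst hn
    unfold makespan
    rw [Real.iSup_of_isEmpty, Real.iSup_of_isEmpty]
    simp
  haveI : Nonempty (Fin n) := Fin.pos_iff_nonempty.mp hn
  set C : Fin 2 → ℝ := ![1, cc] with hC
  have hCpos : ∀ j : Fin 2, 0 < C j := by
    intro j
    rcases (by omega : j = 0 ∨ j = 1) with h | h <;> subst h <;> simp [hC] <;> linarith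
  set M := makespan w C π t with hM
  -- costs in t are nonneg
  have hcost0 : ∀ i, 0 ≤ schedCost w C π t i := by
    intro i
    exact mul_nonneg (hCpos _).le (Finset.sum_nonneg fun i' _ => (hw i').le)
  have hbdd : BddAbove (Set.range (schedCost w C π t)) := Finite.bddAbove_range _
  have hM0 : 0 ≤ M := le_trans (hcost0 (Classical.arbitrary (Fin n))) (le_ciSup hbdd _)
  -- key lower bound: C j * (load of machine j in t) ≤ M
  have key : ∀ j : Fin 2,
      C j * ∑ i ∈ Finset.univ.filter (fun i' => t i' = j), w i ≤ M := by
    intro j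
    set S := Finset.univ.filter (fun i' => t i' = j) with hS
    rcases S.eq_empty_or_nonempty with he | hne
    · rw [he]; simpa using hM0
    · obtain ⟨b, hb, hmax⟩ := S.exists_max_image (π j) hne
      have htb : t b = j := (Finset.mem_filter.mp hb).2
      have hfilter : Finset.univ.filter
          (fun i' => t i' = t b ∧ π (t b) i' ≤ π (t b) b) = S := by
        ext x
        simp only [hS, Finset.mem_filter, Finset.mem_univ, true_and, htb]
        constructor
        · rintro ⟨h1, _⟩; exact h1
        · intro h1; exact ⟨h1, hmax x (by simp [hS, h1])⟩
      have hcb : schedCost w C π t b = C j * ∑ i ∈ S, w i := by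
        rw [schedCost, hfilter, htb]
      calc C j * ∑ i ∈ S, w i = schedCost w C π t b := hcb.symm
        _ ≤ M := le_ciSup hbdd b
  have hA := key 0
  have hB := key 1
  rw [show C 0 = 1 by simp [hC], one_mul] at hA
  rw [show C 1 = cc by simp [hC]] at hB
  -- total weight ≤ (1 + 1/cc) * M
  have hsplit : ∑ i, w i
      = (∑ i ∈ Finset.univ.filter (fun i' => t i' = 0), w i)
      + ∑ i ∈ Finset.univ.filter (fun i' => t i' = 1), w i := by
    rw [← Finset.sum_filter_add_sum_filter_not Finset.univ (fun i' => t i' = 0) w]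
    congr 1
    have : Finset.filter (fun x => ¬ t x = 0) Finset.univ
        = Finset.filter (fun i' => t i' = 1) Finset.univ := by
      ext x; simp only [Finset.mem_filter, Finset.mem_univ, true_and]; omega
    rw [this]
  -- every NE cost is at most the total weight
  have hup : ∀ i, schedCost w C π s i ≤ ∑ i, w i := by
    intro i
    refine le_trans (hs i 0) ?_
    have hupd : Function.update s i 0 i = 0 := Function.update_self i 0 s
    rw [schedCost, hupd]
    rw [show C 0 = 1 by simp [hC], one_mul]
    exact Finset.sum_le_sum_of_subset_of_nonneg (Finset.filter_subset _ _)
      (fun i' _ _ => (hw i').le)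
  have hT : makespan w C π s ≤ ∑ i, w i := ciSup_le hup
  have hBd : (∑ i ∈ Finset.univ.filter (fun i' => t i' = 1), w i) ≤ M / cc := by
    rw [le_div_iff₀ hc0]; linarith
  have hfin : (1 + 1 / cc) * M = M + M / cc := by field_simp
  rw [hfin]
  calc makespan w C π s ≤ ∑ i, w i := hT
    _ ≤ M + M / cc := by rw [hsplit]; linarith
end

section
/- In a scheduling game on two machines with delays c_1 = 1 and c_2 = c where 1 ≤ c ≤ (√5+1)/2, every pure Nash equilibrium s satisfies makespan(s) ≤ (1 + c/(c+1)) · OPT, where OPT is the minimum makespan over all profiles. -/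
/-- Two machines with delays 1 and c, 1 ≤ c ≤ (√5+1)/2: every NE has makespan at
most (1 + c/(c+1)) times the optimal makespan. -/
theorem stmt9 {n : ℕ} (w : Fin n → ℝ) (hw : ∀ i, 0 < w i)
    (cc : ℝ) (hcc1 : 1 ≤ cc) (hcc2 : cc ≤ (Real.sqrt 5 + 1) / 2)
    (π : Fin 2 → Fin n → Fin n) (hπ : ∀ j, Function.Bijective (π j))
    (s : Fin n → Fin 2) (hs : schedNE w ![1, cc] π s)
    (t : Fin n → Fin 2) :
    makespan w ![1, cc] π s ≤ (1 + cc / (cc + 1)) * makespan w ![1, cc] π t := by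
  rcases Nat.eq_zero_or_pos n with hn | hn
  · subst hn
    have he : IsEmpty (Fin 0) := inferInstance
    simp [makespan, Real.iSup_of_isEmpty]
  set c : Fin 2 → ℝ := ![1, cc] with hcdef
  have hcpos : ∀ k : Fin 2, 0 < c k := by
    intro k; fin_cases k <;> simp [hcdef] <;> linarith
  have hc1 : ∀ k : Fin 2, 1 ≤ c k := by
    intro k; fin_cases k <;> simp [hcdef] <;> linarith
  have hc0 : c 0 = 1 := by simp [hcdef]
  have hc1' : c 1 = cc := by simp [hcdef]
  have hwnn : ∀ i, 0 ≤ w i := fun i => (hw i).le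
  have hcost_nonneg : ∀ (u : Fin n → Fin 2) (i : Fin n), 0 ≤ schedCost w c π u i := by
    intro u i
    exact mul_nonneg (hcpos _).le (Finset.sum_nonneg fun j _ => hwnn j)
  have hbdd : ∀ u : Fin n → Fin 2, BddAbove (Set.range (schedCost w c π u)) :=
    fun u => Set.Finite.bddAbove (Set.finite_range _)
  have hle_mk : ∀ (u : Fin n → Fin 2) (i : Fin n), schedCost w c π u i ≤ makespan w c π u :=
    fun u i => le_ciSup (hbdd u) i
  have hne : Nonempty (Fin n) := ⟨⟨0, hn⟩⟩
  obtain ⟨a, ha⟩ := Finite.exists_max (schedCost w c π s)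
  have hM : makespan w c π s = schedCost w c π s a :=
    le_antisymm (ciSup_le ha) (hle_mk s a)
  set OPT := makespan w c π t with hOPTdef
  set M := schedCost w c π s a with hMdef
  set W := ∑ i, w i with hWdef
  -- OPT ≥ w a
  have hOPT_wa : w a ≤ OPT := by
    refine le_trans ?_ (hle_mk t a)
    have hmem : a ∈ Finset.univ.filter
        (fun i' => t i' = t a ∧ π (t a) i' ≤ π (t a) a) := by simp
    have hsum : w a ≤ ∑ i' ∈ Finset.univ.filter
        (fun i' => t i' = t a ∧ π (t a) i' ≤ π (t a) a), w i' :=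
      Finset.single_le_sum (fun j _ => hwnn j) hmem
    have h1 : (1 : ℝ) * w a ≤ c (t a) * ∑ i' ∈ Finset.univ.filter
        (fun i' => t i' = t a ∧ π (t a) i' ≤ π (t a) a), w i' :=
      mul_le_mul (hc1 _) hsum (hwnn a) (hcpos _).le
    rw [one_mul] at h1
    exact h1
  have hOPT0 : 0 ≤ OPT := le_trans (hwnn a) hOPT_wa
  -- OPT ≥ c k * load k for every machine k under any profile u
  have hload : ∀ (u : Fin n → Fin 2) (k : Fin 2),
      c k * ∑ i ∈ Finset.univ.filter (fun i => u i = k), w i ≤ makespan w c π u := by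
    intro u k
    rcases Finset.eq_empty_or_nonempty (Finset.univ.filter (fun i => u i = k)) with he | hnemp
    · rw [he]
      simp only [Finset.sum_empty, mul_zero]
      exact le_trans (hcost_nonneg u a) (hle_mk u a)
    · obtain ⟨b, hb, hmax⟩ := Finset.exists_max_image _ (fun i => π k i) hnemp
      have hub : u b = k := (Finset.mem_filter.mp hb).2
      have hfil : Finset.univ.filter (fun i' => u i' = u b ∧ π (u b) i' ≤ π (u b) b)
          = Finset.univ.filter (fun i => u i = k) := by
        ext i
        simp only [Finset.mem_filter, Finset.mem_univ, true_and, hub]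
        constructor
        · exact fun h => h.1
        · intro h
          exact ⟨h, hmax i (Finset.mem_filter.mpr ⟨Finset.mem_univ i, h⟩)⟩
      have : schedCost w c π u b
          = c k * ∑ i ∈ Finset.univ.filter (fun i => u i = k), w i := by
        unfold schedCost
        rw [hfil, hub]
      rw [← this]
      exact hle_mk u b
  -- split of total weight
  have hsplit : ∀ u : Fin n → Fin 2,
      (∑ i ∈ Finset.univ.filter (fun i => u i = 0), w i)
        + (∑ i ∈ Finset.univ.filter (fun i => u i = 1), w i) = W := by
    intro u
    have hfe : Finset.univ.filter (fun i => u i = 1)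
        = Finset.univ.filter (fun i => ¬ u i = 0) := by
      ext i
      simp only [Finset.mem_filter, Finset.mem_univ, true_and]
      have h2 := (u i).isLt
      rw [Fin.ext_iff, Fin.ext_iff]
      simp only [Fin.val_zero, Fin.val_one]
      omega
    rw [hWdef, ← Finset.sum_filter_add_sum_filter_not Finset.univ (fun i => u i = 0) w, hfe]
  -- cost of a bounded by own-machine load
  have hA : M ≤ c (s a) * ∑ i ∈ Finset.univ.filter (fun i => s i = s a), w i := by
    rw [hMdef]
    unfold schedCost
    refine mul_le_mul_of_nonneg_left
      (Finset.sum_le_sum_of_subset_of_nonneg ?_ fun i _ _ => hwnn i) (hcpos _).le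
    intro i hi
    simp only [Finset.mem_filter, Finset.mem_univ, true_and] at hi ⊢
    exact hi.1
  -- NE bound
  have hNE : ∀ j : Fin 2, j ≠ s a →
      M ≤ c j * ((∑ i ∈ Finset.univ.filter (fun i => s i = j), w i) + w a) := by
    intro j hj
    refine le_trans (hs a j) ?_
    unfold schedCost
    rw [Function.update_self]
    refine mul_le_mul_of_nonneg_left ?_ (hcpos j).le
    have hsub : Finset.univ.filter
        (fun i' => Function.update s a j i' = j ∧ π j i' ≤ π j a)
        ⊆ insert a (Finset.univ.filter (fun i' => s i' = j)) := by
      intro i hi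
      simp only [Finset.mem_filter, Finset.mem_univ, true_and] at hi
      by_cases hia : i = a
      · simp [hia]
      · rw [Function.update_of_ne hia] at hi
        simp only [Finset.mem_insert, Finset.mem_filter, Finset.mem_univ, true_and]
        exact Or.inr hi.1
    have hnotmem : a ∉ Finset.univ.filter (fun i' => s i' = j) := by
      simp only [Finset.mem_filter, Finset.mem_univ, true_and]
      exact fun h => hj (h.symm)
    calc ∑ i ∈ Finset.univ.filter
          (fun i' => Function.update s a j i' = j ∧ π j i' ≤ π j a), w i
        ≤ ∑ i ∈ insert a (Finset.univ.filter (fun i' => s i' = j)), w i :=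
          Finset.sum_le_sum_of_subset_of_nonneg hsub fun i _ _ => hwnn i
      _ = w a + ∑ i ∈ Finset.univ.filter (fun i' => s i' = j), w i :=
          Finset.sum_insert hnotmem
      _ = (∑ i ∈ Finset.univ.filter (fun i' => s i' = j), w i) + w a := by ring
  -- key inequality: (cc+1) * M ≤ cc * (W + w a)
  set L0 := ∑ i ∈ Finset.univ.filter (fun i => s i = 0), w i with hL0
  set L1 := ∑ i ∈ Finset.univ.filter (fun i => s i = 1), w i with hL1
  have hLW : L0 + L1 = W := hsplit s
  have hkey : (cc + 1) * M ≤ cc * (W + w a) := by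
    have hsa : s a = 0 ∨ s a = 1 := by
      have h2 := (s a).isLt
      rw [Fin.ext_iff, Fin.ext_iff]
      simp only [Fin.val_zero, Fin.val_one]
      omega
    rcases hsa with h | h
    · have h1 : M ≤ L0 := by
        have := hA; rw [h, hc0, one_mul] at this; exact this
      have h2 : M ≤ cc * (L1 + w a) := by
        have := hNE 1 (by rw [h]; exact one_ne_zero)
        rw [hc1'] at this; exact this
      nlinarith [mul_le_mul_of_nonneg_left h1 (by linarith : (0:ℝ) ≤ cc)]
    · have h1 : M ≤ cc * L1 := by
        have := hA; rw [h, hc1'] at this; exact this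
      have h2 : M ≤ L0 + w a := by
        have := hNE 0 (by rw [h]; exact (zero_ne_one)
          )
        rw [hc0, one_mul] at this; exact this
      nlinarith [mul_le_mul_of_nonneg_left h2 (by linarith : (0:ℝ) ≤ cc)]
  -- OPT lower bound from total weight
  have hWOPT : cc * W ≤ (cc + 1) * OPT := by
    have h0 : c 0 * ∑ i ∈ Finset.univ.filter (fun i => t i = 0), w i ≤ OPT := hload t 0
    have h1 : c 1 * ∑ i ∈ Finset.univ.filter (fun i => t i = 1), w i ≤ OPT := hload t 1
    rw [hc0, one_mul] at h0
    rw [hc1'] at h1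
    have hsp := hsplit t
    nlinarith [mul_le_mul_of_nonneg_left h0 (by linarith : (0:ℝ) ≤ cc)]
  -- finish
  rw [hM]
  have hccp : (0:ℝ) < cc + 1 := by linarith
  have hexp : 1 + cc / (cc + 1) = (2 * cc + 1) / (cc + 1) := by
    rw [eq_div_iff (ne_of_gt hccp), add_mul, one_mul,
      div_mul_cancel₀ _ (ne_of_gt hccp)]
    ring
  rw [hexp, div_mul_eq_mul_div, le_div_iff₀ hccp]
  nlinarith [mul_le_mul_of_nonneg_left hOPT_wa (by linarith : (0:ℝ) ≤ cc)]
end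

section
/- In a scheduling game on m identical machines (c_j = 1 for all j) with arbitrary priority lists, every pure Nash equilibrium s satisfies makespan(s) ≤ (2 − 1/m) · OPT, where OPT is the minimum makespan. -/
lemma schedCost_one {n m : ℕ} (w : Fin n → ℝ) (π : Fin m → Fin n → Fin n)
    (u : Fin n → Fin m) (i : Fin n) :
    schedCost w (fun _ => (1:ℝ)) π u i
      = ∑ i' ∈ Finset.univ.filter (fun i' => u i' = u i ∧ π (u i) i' ≤ π (u i) i), w i' := by
  simp [schedCost]

lemma load_le_makespan {n m : ℕ} (w : Fin n → ℝ) (π : Fin m → Fin n → Fin n)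
    (hw : ∀ i, 0 < w i) (u : Fin n → Fin m) (j : Fin m) (hne : ∃ i, u i = j) :
    (∑ i' ∈ Finset.univ.filter (fun i' => u i' = j), w i')
      ≤ makespan w (fun _ => (1:ℝ)) π u := by
  classical
  obtain ⟨i0, hi0⟩ := hne
  obtain ⟨i, hiF, hmax⟩ := Finset.exists_max_image
      (Finset.univ.filter fun i' => u i' = j) (fun i' => π j i') ⟨i0, by simp [hi0]⟩
  have hui : u i = j := by simpa using hiF
  have hset : (Finset.univ.filter fun i' => u i' = u i ∧ π (u i) i' ≤ π (u i) i)
      = Finset.univ.filter fun i' => u i' = j := by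
    ext i'
    simp only [Finset.mem_filter, Finset.mem_univ, true_and, hui]
    constructor
    · rintro ⟨h1, _⟩; exact h1
    · intro h1; exact ⟨h1, hmax i' (by simp [h1])⟩
  have hc : schedCost w (fun _ => (1:ℝ)) π u i
      = ∑ i' ∈ Finset.univ.filter (fun i' => u i' = j), w i' := by
    rw [schedCost_one, hset]
  rw [← hc]
  exact le_ciSup (Set.Finite.bddAbove (Set.finite_range _)) i

/-- On m identical machines, every NE has makespan at most (2 - 1/m) times optimal. -/
theorem stmt10 {n m : ℕ} (hm : 0 < m)
    (w : Fin n → ℝ) (hw : ∀ i, 0 < w i)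
    (π : Fin m → Fin n → Fin n) (hπ : ∀ j, Function.Bijective (π j))
    (s : Fin n → Fin m) (hs : schedNE w (fun _ => (1:ℝ)) π s)
    (t : Fin n → Fin m) :
    makespan w (fun _ => (1:ℝ)) π s
      ≤ (2 - 1 / (m:ℝ)) * makespan w (fun _ => (1:ℝ)) π t := by
  classical
  rcases isEmpty_or_nonempty (Fin n) with hE | hNE
  · simp [makespan, Real.iSup_of_isEmpty]
  have hm' : (0:ℝ) < m := by exact_mod_cast hm
  have h1m : (1:ℝ) ≤ m := by exact_mod_cast hm
  set OPT := makespan w (fun _ => (1:ℝ)) π t with hOPT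
  set W := ∑ i, w i with hW
  -- sum of loads equals total weight, for any profile
  have hfib : ∀ u : Fin n → Fin m,
      ∑ j, (∑ i' ∈ Finset.univ.filter (fun i' => u i' = j), w i') = W := by
    intro u
    rw [hW]
    exact Finset.sum_fiberwise _ _ _
  have hwOPT : ∀ i, w i ≤ OPT := by
    intro i
    have h1 : w i ≤ ∑ i' ∈ Finset.univ.filter (fun i' => t i' = t i), w i' :=
      Finset.single_le_sum (fun i' _ => (hw i').le) (by simp)
    exact h1.trans (load_le_makespan w π hw t (t i) ⟨i, rfl⟩)
  have hOPTpos : 0 < OPT := lt_of_lt_of_le (hw (Classical.arbitrary _)) (hwOPT _)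
  have hload_le : ∀ j, (∑ i' ∈ Finset.univ.filter (fun i' => t i' = j), w i') ≤ OPT := by
    intro j
    by_cases hne : ∃ i, t i = j
    · exact load_le_makespan w π hw t j hne
    · push_neg at hne
      have he : Finset.univ.filter (fun i' => t i' = j) = ∅ := by
        ext i'; simp [hne i']
      simp [he, hOPTpos.le]
  have hWOPT : W ≤ m * OPT := by
    calc W = ∑ j, (∑ i' ∈ Finset.univ.filter (fun i' => t i' = j), w i') := (hfib t).symm
      _ ≤ ∑ _j : Fin m, OPT := Finset.sum_le_sum (fun j _ => hload_le j)
      _ = m * OPT := by simp [mul_comm]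
  -- NE bound: moving to any machine j
  have hNEbound : ∀ (i : Fin n) (j : Fin m),
      schedCost w (fun _ => (1:ℝ)) π s i
        ≤ (∑ i' ∈ Finset.univ.filter (fun i' => s i' = j), w i') + w i := by
    intro i j
    refine (hs i j).trans ?_
    rw [schedCost_one]
    have hupd : Function.update s i j i = j := by simp
    have hsub : (Finset.univ.filter fun i' => Function.update s i j i' = Function.update s i j i
        ∧ π (Function.update s i j i) i' ≤ π (Function.update s i j i) i)
        ⊆ insert i (Finset.univ.filter fun i' => s i' = j) := by
      intro i' hi'
      simp only [Finset.mem_filter, Finset.mem_univ, true_and, hupd] at hi'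
      by_cases h : i' = i
      · simp [h]
      · simp only [Finset.mem_insert, Finset.mem_filter, Finset.mem_univ, true_and]
        right
        rw [Function.update_of_ne h] at hi'
        exact hi'.1
    calc _ ≤ ∑ i' ∈ insert i (Finset.univ.filter fun i' => s i' = j), w i' :=
        Finset.sum_le_sum_of_subset_of_nonneg hsub (fun i' _ _ => (hw i').le)
      _ ≤ (∑ i' ∈ Finset.univ.filter (fun i' => s i' = j), w i') + w i := by
        by_cases h : i ∈ Finset.univ.filter (fun i' => s i' = j)
        · rw [Finset.insert_eq_self.mpr h]
          have := (hw i).le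
          linarith
        · rw [Finset.sum_insert h]; linarith
  -- own-machine bound
  have hown : ∀ i : Fin n, schedCost w (fun _ => (1:ℝ)) π s i
      ≤ ∑ i' ∈ Finset.univ.filter (fun i' => s i' = s i), w i' := by
    intro i
    rw [schedCost_one]
    refine Finset.sum_le_sum_of_subset_of_nonneg ?_ (fun i' _ _ => (hw i').le)
    intro i' hi'
    simp only [Finset.mem_filter, Finset.mem_univ, true_and] at hi' ⊢
    exact hi'.1
  have hmain : ∀ i : Fin n, (m:ℝ) * schedCost w (fun _ => (1:ℝ)) π s i
      ≤ W + ((m:ℝ) - 1) * w i := by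
    intro i
    have hsumb : ∑ _j : Fin m, schedCost w (fun _ => (1:ℝ)) π s i
        ≤ ∑ j : Fin m, ((∑ i' ∈ Finset.univ.filter (fun i' => s i' = j), w i')
            + w i - (if j = s i then w i else 0)) := by
      refine Finset.sum_le_sum (fun j _ => ?_)
      by_cases h : j = s i
      · subst h
        simpa using hown i
      · simp only [h, if_false]
        have := hNEbound i j
        linarith
    have hlhs : ∑ _j : Fin m, schedCost w (fun _ => (1:ℝ)) π s i
        = (m:ℝ) * schedCost w (fun _ => (1:ℝ)) π s i := by
      simp [mul_comm]
    have hrhs : ∑ j : Fin m, ((∑ i' ∈ Finset.univ.filter (fun i' => s i' = j), w i')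
            + w i - (if j = s i then w i else 0))
        = W + (m:ℝ) * w i - w i := by
      rw [Finset.sum_sub_distrib, Finset.sum_add_distrib, hfib s]
      simp [mul_comm]
    rw [hlhs, hrhs] at hsumb
    linarith
  rw [makespan]
  apply ciSup_le
  intro i
  have key : (m:ℝ) * schedCost w (fun _ => (1:ℝ)) π s i
      ≤ (m:ℝ) * ((2 - 1 / (m:ℝ)) * OPT) := by
    have heq : (m:ℝ) * ((2 - 1 / (m:ℝ)) * OPT) = (2 * m - 1) * OPT := by
      field_simp
    rw [heq]
    have h2 : ((m:ℝ) - 1) * w i ≤ ((m:ℝ) - 1) * OPT :=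
      mul_le_mul_of_nonneg_left (hwOPT i) (by linarith)
    have h3 := hmain i
    nlinarith
  exact le_of_mul_le_mul_left key hm'
end

section
/- For every m ≥ 2, there is a scheduling game on m identical machines — one job of weight m and m(m−1) unit-weight jobs, with priority lists placing the heavy job last — in which every pure Nash equilibrium has makespan 2m−1, while the optimal makespan is m; hence the price of stability with respect to makespan is exactly 2 − 1/m. -/
open Finset

namespace PriorityScheduling

section Draft

variable {α β : Type*} [Nonempty α] [LinearOrder β]

noncomputable def minBy (f : α → β) (R : Finset α) : α :=
  Classical.epsilon fun x => x ∈ R ∧ ∀ y ∈ R, f x ≤ f y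

theorem minBy_spec {f : α → β} {R : Finset α} (hR : R.Nonempty) :
    minBy f R ∈ R ∧ ∀ y ∈ R, f (minBy f R) ≤ f y :=
  Classical.epsilon_spec (R.exists_min_image f hR)

variable [DecidableEq α] (key : ℕ → α → β) (S : Finset α)

noncomputable def draftRemaining : ℕ → Finset α
  | 0 => S
  | t + 1 => (draftRemaining t).erase (minBy (key t) (draftRemaining t))

noncomputable def draftPick (t : ℕ) : α :=
  minBy (key t) (draftRemaining key S t)

noncomputable def draftTime (y : α) : ℕ :=
  Function.invFunOn (draftPick key S) (Set.Iio #S) y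

variable {key S}

theorem draftRemaining_succ (t : ℕ) :
    draftRemaining key S (t + 1) = (draftRemaining key S t).erase (draftPick key S t) := rfl

theorem draftRemaining_antitone : Antitone (draftRemaining key S) :=
  antitone_nat_of_succ_le fun _ => erase_subset _ _

theorem card_draftRemaining {t : ℕ} (ht : t ≤ #S) : #(draftRemaining key S t) = #S - t := by
  induction t with
  | zero => rfl
  | succ t ih =>
    have hne : (draftRemaining key S t).Nonempty := by
      rw [← card_pos, ih (by omega)]; omega
    rw [draftRemaining_succ, card_erase_of_mem (a := draftPick key S t) (minBy_spec hne).1,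
      ih (by omega)]
    omega

theorem draftRemaining_nonempty {t : ℕ} (ht : t < #S) : (draftRemaining key S t).Nonempty := by
  rw [← card_pos, card_draftRemaining ht.le]; omega

theorem draftPick_mem_draftRemaining {t : ℕ} (ht : t < #S) :
    draftPick key S t ∈ draftRemaining key S t :=
  (minBy_spec (draftRemaining_nonempty ht)).1

theorem draftPick_mem {t : ℕ} (ht : t < #S) : draftPick key S t ∈ S :=
  draftRemaining_antitone (Nat.zero_le t) (draftPick_mem_draftRemaining ht)

theorem key_draftPick_le {t t' : ℕ} (htt' : t ≤ t') (ht' : t' < #S) :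
    key t (draftPick key S t) ≤ key t (draftPick key S t') :=
  (minBy_spec (draftRemaining_nonempty (htt'.trans_lt ht'))).2 _
    (draftRemaining_antitone htt' (draftPick_mem_draftRemaining ht'))

theorem draftPick_injOn : Set.InjOn (draftPick key S) (Set.Iio #S) := by
  suffices h : ∀ t t', t < t' → t' < #S → draftPick key S t ≠ draftPick key S t' by
    intro t ht t' ht' heq
    by_contra hne
    rcases Nat.lt_or_gt_of_ne hne with hlt | hlt
    · exact h t t' hlt ht' heq
    · exact h t' t hlt ht heq.symm
  intro t t' hlt ht' heq
  have hmem : draftPick key S t' ∈ draftRemaining key S (t + 1) :=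
    draftRemaining_antitone hlt (draftPick_mem_draftRemaining ht')
  rw [← heq, draftRemaining_succ] at hmem
  exact notMem_erase _ _ hmem

theorem image_draftPick_range : (range #S).image (draftPick key S) = S := by
  refine eq_of_subset_of_card_le ?_ ?_
  · simp only [image_subset_iff, mem_range]
    exact fun t ht => draftPick_mem ht
  · rw [card_image_of_injOn (by rw [coe_range]; exact draftPick_injOn), card_range]

theorem exists_draftPick_eq {y : α} (hy : y ∈ S) :
    ∃ t ∈ Set.Iio #S, draftPick key S t = y := by
  rw [← image_draftPick_range (key := key) (S := S), mem_image] at hy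
  simpa using hy

theorem draftTime_lt {y : α} (hy : y ∈ S) : draftTime key S y < #S :=
  Function.invFunOn_mem (exists_draftPick_eq hy)

theorem draftPick_draftTime {y : α} (hy : y ∈ S) : draftPick key S (draftTime key S y) = y :=
  Function.invFunOn_eq (exists_draftPick_eq hy)

theorem draftTime_draftPick {t : ℕ} (ht : t < #S) : draftTime key S (draftPick key S t) = t :=
  draftPick_injOn.leftInvOn_invFunOn ht

end Draft

section IdenticalMachines

variable {n m : ℕ}

def load (w : Fin n → ℝ) (s : Fin n → Fin m) (j : Fin m) : ℝ :=
  ∑ i with s i = j, w i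

variable {w : Fin n → ℝ} {π : Fin m → Fin n → Fin n} {s : Fin n → Fin m}

theorem schedCost_le_makespan (c : Fin m → ℝ) (i : Fin n) :
    schedCost w c π s i ≤ makespan w c π s :=
  le_ciSup (Set.finite_range _).bddAbove i

theorem schedCost_nonneg (hw : ∀ i, 0 ≤ w i) (i : Fin n) :
    0 ≤ schedCost w (fun _ => 1) π s i := by
  rw [schedCost, one_mul]
  exact sum_nonneg fun _ _ => hw _

theorem schedCost_le_load (hw : ∀ i, 0 ≤ w i) (i : Fin n) :
    schedCost w (fun _ => 1) π s i ≤ load w s (s i) := by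
  rw [schedCost, one_mul, load]
  refine sum_le_sum_of_subset_of_nonneg (fun x hx => ?_) (fun _ _ _ => hw _)
  simp only [mem_filter, mem_univ, true_and] at hx ⊢
  exact hx.1

theorem schedCost_eq_load_of_forall_le {i : Fin n}
    (h : ∀ i', s i' = s i → π (s i) i' ≤ π (s i) i) :
    schedCost w (fun _ => 1) π s i = load w s (s i) := by
  rw [schedCost, one_mul, load]
  congr 1
  exact filter_congr fun i' _ => ⟨fun h' => h'.1, fun h' => ⟨h', h i' h'⟩⟩

theorem exists_schedCost_eq_load {j : Fin m} (hj : ∃ i, s i = j) :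
    ∃ i, s i = j ∧ schedCost w (fun _ => 1) π s i = load w s j := by
  obtain ⟨i₀, hi₀⟩ := hj
  obtain ⟨i, hi, hmax⟩ := exists_max_image {i | s i = j} (π j) ⟨i₀, by simpa using hi₀⟩
  simp only [mem_filter, mem_univ, true_and] at hi hmax
  subst hi
  exact ⟨i, rfl, schedCost_eq_load_of_forall_le hmax⟩

theorem load_le_makespan (hw : ∀ i, 0 ≤ w i) (j : Fin m) :
    load w s j ≤ makespan w (fun _ => 1) π s := by
  by_cases hj : ∃ i, s i = j
  · obtain ⟨i, -, hi⟩ := exists_schedCost_eq_load (w := w) (π := π) hj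
    exact hi ▸ schedCost_le_makespan _ i
  · have hempty : load w s j = 0 := by
      push Not at hj
      simp [load, hj]
    rw [hempty]
    exact Real.iSup_nonneg fun i => schedCost_nonneg hw i

theorem sum_load (w : Fin n → ℝ) (s : Fin n → Fin m) : ∑ j, load w s j = ∑ i, w i :=
  sum_fiberwise _ _ _

theorem sum_div_le_makespan [NeZero m] (hw : ∀ i, 0 ≤ w i) :
    (∑ i, w i) / m ≤ makespan w (fun _ => 1) π s := by
  obtain ⟨j, -, hj⟩ := exists_le_of_sum_le (f := fun _ => (∑ i, w i) / m) (g := load w s)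
    univ_nonempty (by simp [sum_load, mul_div_cancel₀ _ (NeZero.ne (m : ℝ))])
  exact hj.trans (load_le_makespan hw j)

theorem makespan_le_of_load_le [NeZero n] (hw : ∀ i, 0 ≤ w i) {C : ℝ}
    (h : ∀ j, load w s j ≤ C) : makespan w (fun _ => 1) π s ≤ C :=
  ciSup_le fun i => (schedCost_le_load hw i).trans (h _)

end IdenticalMachines

section HeavyJob

variable {N m : ℕ}

def heavyWeights (W : ℝ) : Fin (N + 1) → ℝ := fun i => if i = 0 then W else 1

def units (s : Fin (N + 1) → Fin m) (j : Fin m) : Finset (Fin (N + 1)) :=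
  {i | i ≠ 0 ∧ s i = j}

variable {W : ℝ} {π : Fin m → Fin (N + 1) → Fin (N + 1)} {s : Fin (N + 1) → Fin m}

theorem sum_heavyWeights_of_zero_notMem {A : Finset (Fin (N + 1))} (hA : 0 ∉ A) :
    ∑ i ∈ A, heavyWeights W i = #A := by
  have hone : ∀ i ∈ A, heavyWeights W i = 1 := fun i hi => if_neg (ne_of_mem_of_not_mem hi hA)
  rw [sum_congr rfl hone, sum_const, nsmul_one]

theorem heavyWeights_nonneg (hW : 0 ≤ W) (i : Fin (N + 1)) : 0 ≤ heavyWeights W i := by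
  unfold heavyWeights
  split_ifs <;> linarith

theorem sum_heavyWeights : ∑ i : Fin (N + 1), heavyWeights W i = W + N := by
  rw [Fin.sum_univ_succ]
  simp [heavyWeights]

theorem zero_notMem_units (s : Fin (N + 1) → Fin m) (j : Fin m) : 0 ∉ units s j := by
  simp [units]

theorem load_heavyWeights (s : Fin (N + 1) → Fin m) (j : Fin m) :
    load (heavyWeights W) s j = (if s 0 = j then W else 0) + #(units s j) := by
  have hsplit : ({i | s i = j} : Finset (Fin (N + 1))) =
      if s 0 = j then insert 0 (units s j) else units s j := by
    ext i
    by_cases hi : i = 0 <;> split_ifs <;> simp_all [units]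
  rw [load, hsplit]
  split_ifs
  · rw [sum_insert (zero_notMem_units s j),
      sum_heavyWeights_of_zero_notMem (zero_notMem_units s j)]
    simp [heavyWeights]
  · rw [sum_heavyWeights_of_zero_notMem (zero_notMem_units s j), zero_add]

theorem sum_card_units (s : Fin (N + 1) → Fin m) : ∑ j, #(units s j) = N := by
  have h := card_eq_sum_card_fiberwise (f := s) (s := univ.erase 0) (t := univ)
    (fun _ _ => mem_coe.2 (mem_univ _))
  rw [card_erase_of_mem (mem_univ _), card_univ, Fintype.card_fin, Nat.add_sub_cancel] at h
  refine (h.trans (sum_congr rfl fun j _ => ?_)).symm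
  congr 1
  ext i
  simp [units]

theorem units_update_zero (s : Fin (N + 1) → Fin m) (j : Fin m) :
    units (Function.update s 0 j) = units s := by
  ext j' i
  simp only [units, mem_filter, mem_univ, true_and, and_congr_right_iff]
  exact fun hi => by rw [Function.update_of_ne hi]

variable (hlast : ∀ j i, i ≠ 0 → π j i < π j 0)
include hlast

theorem schedCost_heavy (s : Fin (N + 1) → Fin m) :
    schedCost (heavyWeights W) (fun _ => 1) π s 0 = W + #(units s (s 0)) := by
  rw [schedCost_eq_load_of_forall_le, load_heavyWeights, if_pos rfl]
  intro i _
  rcases eq_or_ne i 0 with rfl | hi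
  · exact le_rfl
  · exact (hlast _ i hi).le

theorem schedCost_unit {i : Fin (N + 1)} (hi : i ≠ 0) :
    schedCost (heavyWeights W) (fun _ => 1) π s i =
      #({i' | s i' = s i ∧ π (s i) i' ≤ π (s i) i} : Finset (Fin (N + 1))) := by
  rw [schedCost, one_mul, sum_heavyWeights_of_zero_notMem]
  simpa using fun _ => hlast (s i) i hi

theorem schedCost_unit_le_card_units {i : Fin (N + 1)} (hi : i ≠ 0) :
    schedCost (heavyWeights W) (fun _ => 1) π s i ≤ #(units s (s i)) := by
  rw [schedCost_unit hlast hi]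
  refine Nat.cast_le.2 (card_le_card fun i' hi' => ?_)
  simp only [units, mem_filter, mem_univ, true_and] at hi' ⊢
  refine ⟨?_, hi'.1⟩
  rintro rfl
  exact (hlast _ i hi).not_ge hi'.2

theorem schedCost_update_unit_le {i : Fin (N + 1)} (hi : i ≠ 0) (j : Fin m) :
    schedCost (heavyWeights W) (fun _ => 1) π (Function.update s i j) i ≤ #(units s j) + 1 := by
  refine (schedCost_unit_le_card_units hlast hi).trans ?_
  rw [Function.update_self]
  have hsub : units (Function.update s i j) j ⊆ insert i (units s j) := by
    intro x hx
    rcases eq_or_ne x i with rfl | hxi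
    · exact mem_insert_self _ _
    · simp_all [units]
  exact_mod_cast (card_le_card hsub).trans (card_insert_le _ _)

end HeavyJob

theorem eq_of_sum_eq_card_mul {ι : Type*} [Fintype ι] {f : ι → ℕ} {k : ℕ} (j₀ : ι)
    (hlo : ∀ j, f j₀ ≤ f j) (hhi : ∀ j, f j ≤ f j₀ + 1)
    (hsum : ∑ j, f j = Fintype.card ι * k) : f j₀ = k := by
  have hpos : 0 < Fintype.card ι := Fintype.card_pos_iff.2 ⟨j₀⟩
  have hle : Fintype.card ι * f j₀ ≤ Fintype.card ι * k := by
    simpa [hsum] using sum_le_sum fun j (_ : j ∈ univ) => hlo j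
  have hlt : Fintype.card ι * k < Fintype.card ι * (f j₀ + 1) := by
    simpa [hsum] using
      sum_lt_sum (fun j (_ : j ∈ univ) => hhi j) ⟨j₀, mem_univ _, lt_add_one _⟩
  have := Nat.le_of_mul_le_mul_left hle hpos
  have := Nat.lt_of_mul_lt_mul_left hlt
  omega

section Equilibria

variable {N m : ℕ} {W : ℝ} {π : Fin m → Fin (N + 1) → Fin (N + 1)}
  {s : Fin (N + 1) → Fin m} (hlast : ∀ j i, i ≠ 0 → π j i < π j 0)
include hlast

theorem card_units_heavy_le_of_schedNE (hNE : schedNE (heavyWeights W) (fun _ => 1) π s)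
    (j : Fin m) : #(units s (s 0)) ≤ #(units s j) := by
  have h := hNE 0 j
  rw [schedCost_heavy hlast, schedCost_heavy hlast, Function.update_self, units_update_zero]
    at h
  exact_mod_cast le_of_add_le_add_left h

/-- The last unit job of a machine could move in front of the heavy job. -/
theorem card_units_le_heavy_succ_of_schedNE (hNE : schedNE (heavyWeights W) (fun _ => 1) π s)
    (j : Fin m) : #(units s j) ≤ #(units s (s 0)) + 1 := by
  rcases eq_or_ne (s 0) j with rfl | hj
  · exact Nat.le_succ _
  rcases (units s j).eq_empty_or_nonempty with hempty | ⟨i₀, hi₀⟩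
  · simp [hempty]
  obtain ⟨i, hij, hcost⟩ := exists_schedCost_eq_load (w := heavyWeights W) (π := π)
    ⟨i₀, (mem_filter.1 hi₀).2.2⟩
  have hi : i ≠ 0 := by rintro rfl; exact hj hij
  rw [load_heavyWeights, if_neg hj, zero_add] at hcost
  exact_mod_cast hcost ▸ (hNE i (s 0)).trans (schedCost_update_unit_le hlast hi _)

theorem makespan_of_schedNE {k : ℕ} (hN : N = m * k) (hW : 1 ≤ W)
    (hNE : schedNE (heavyWeights W) (fun _ => 1) π s) :
    makespan (heavyWeights W) (fun _ => 1) π s = W + k := by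
  have hheavy : #(units s (s 0)) = k := by
    refine eq_of_sum_eq_card_mul (s 0) (card_units_heavy_le_of_schedNE hlast hNE)
      (card_units_le_heavy_succ_of_schedNE hlast hNE) ?_
    rw [sum_card_units, Fintype.card_fin, hN]
  have hcost₀ : schedCost (heavyWeights W) (fun _ => 1) π s 0 = W + k := by
    rw [schedCost_heavy hlast, hheavy]
  refine le_antisymm (ciSup_le fun i => ?_) (hcost₀ ▸ schedCost_le_makespan _ 0)
  rcases eq_or_ne i 0 with rfl | hi
  · exact hcost₀.le
  calc schedCost (heavyWeights W) (fun _ => 1) π s i ≤ #(units s (s i)) :=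
        schedCost_unit_le_card_units hlast hi
    _ ≤ k + 1 := by
      have h := card_units_le_heavy_succ_of_schedNE hlast hNE (s i)
      rw [hheavy] at h
      exact_mod_cast h
    _ ≤ W + k := by linarith

end Equilibria

section RoundRobin

variable {N m : ℕ} [NeZero m] (π : Fin m → Fin (N + 1) → Fin (N + 1))

/-- Round-robin draft of the unit jobs: at time `t`, machine `t mod m` takes the remaining unit
job that comes first in its priority list. -/
noncomputable def roundRobinPick : ℕ → Fin (N + 1) :=
  draftPick (fun t => π (Fin.ofNat m t)) (univ.erase 0)

noncomputable def roundRobinTime : Fin (N + 1) → ℕ :=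
  draftTime (fun t => π (Fin.ofNat m t)) (univ.erase 0)

/-- Every unit job goes to the machine that drafted it. The heavy job is never drafted, so it
lands on an arbitrary machine; this is harmless because all machines receive equally many
unit jobs. -/
noncomputable def roundRobin (i : Fin (N + 1)) : Fin m :=
  Fin.ofNat m (roundRobinTime π i)

variable {π}

theorem card_univ_erase_zero : #(univ.erase (0 : Fin (N + 1))) = N := by
  simp

theorem roundRobinTime_lt {i : Fin (N + 1)} (hi : i ≠ 0) : roundRobinTime π i < N := by
  have h := draftTime_lt (key := fun t => π (Fin.ofNat m t)) (mem_erase.2 ⟨hi, mem_univ i⟩)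
  rwa [card_univ_erase_zero] at h

theorem roundRobinPick_roundRobinTime {i : Fin (N + 1)} (hi : i ≠ 0) :
    roundRobinPick π (roundRobinTime π i) = i :=
  draftPick_draftTime (mem_erase.2 ⟨hi, mem_univ i⟩)

theorem roundRobinTime_roundRobinPick {t : ℕ} (ht : t < N) :
    roundRobinTime π (roundRobinPick π t) = t :=
  draftTime_draftPick (by rwa [card_univ_erase_zero])

theorem roundRobinPick_ne_zero {t : ℕ} (ht : t < N) : roundRobinPick π t ≠ 0 :=
  ne_of_mem_erase (draftPick_mem (by rwa [card_univ_erase_zero]))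

theorem roundRobin_roundRobinPick {t : ℕ} (ht : t < N) :
    roundRobin π (roundRobinPick π t) = Fin.ofNat m t := by
  rw [roundRobin, roundRobinTime_roundRobinPick ht]

theorem priority_roundRobinPick_le {t t' : ℕ} (htt' : t ≤ t') (ht' : t' < N) :
    π (Fin.ofNat m t) (roundRobinPick π t) ≤ π (Fin.ofNat m t) (roundRobinPick π t') :=
  key_draftPick_le htt' (by rwa [card_univ_erase_zero])

theorem ofNat_mul_add (r : ℕ) (j : Fin m) : Fin.ofNat m (r * m + j) = j := by
  ext
  simp [Nat.mod_eq_of_lt j.isLt]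

theorem eq_of_roundRobin_eq {i i' : Fin (N + 1)} (hi : i ≠ 0) (hi' : i' ≠ 0)
    (hs : roundRobin π i = roundRobin π i')
    (hr : roundRobinTime π i / m = roundRobinTime π i' / m) : i = i' := by
  have hmod : roundRobinTime π i % m = roundRobinTime π i' % m := by
    simpa [roundRobin, Fin.ext_iff] using hs
  have htime : roundRobinTime π i = roundRobinTime π i' := by
    rw [← Nat.div_add_mod (roundRobinTime π i) m, ← Nat.div_add_mod (roundRobinTime π i') m,
      hr, hmod]
  rw [← roundRobinPick_roundRobinTime (π := π) hi, htime, roundRobinPick_roundRobinTime hi']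

theorem card_le_of_round_lt {A : Finset (Fin (N + 1))} {j : Fin m} {R : ℕ}
    (hA : ∀ i ∈ A, i ≠ 0 ∧ roundRobin π i = j ∧ roundRobinTime π i / m < R) :
    #A ≤ R := by
  simpa using card_le_card_of_injOn (t := range R) (fun i => roundRobinTime π i / m)
    (fun i hi => mem_range.2 (hA i hi).2.2) fun i hi i' hi' hr =>
      eq_of_roundRobin_eq (hA i hi).1 (hA i' hi').1 ((hA i hi).2.1.trans (hA i' hi').2.1.symm) hr

theorem le_card_of_roundRobinPick_mem {A : Finset (Fin (N + 1))} {j : Fin m} {R : ℕ}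
    (hR : ∀ r < R, r * m + j < N ∧ roundRobinPick π (r * m + j) ∈ A) : R ≤ #A := by
  simpa using card_le_card_of_injOn (s := range R) (fun r => roundRobinPick π (r * m + j))
    (fun r hr => (hR r (mem_range.1 hr)).2) fun r hr r' hr' heq => by
      have h := congrArg (roundRobinTime π) heq
      simp only [roundRobinTime_roundRobinPick (hR r (mem_range.1 hr)).1,
        roundRobinTime_roundRobinPick (hR r' (mem_range.1 hr')).1] at h
      exact Nat.eq_of_mul_eq_mul_right (NeZero.pos m) (by omega)

end RoundRobin

section RoundRobinEquilibrium

variable {N m : ℕ} [NeZero m] {W : ℝ} {π : Fin m → Fin (N + 1) → Fin (N + 1)}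

theorem card_units_roundRobin {k : ℕ} (hN : N = m * k) (j : Fin m) :
    #(units (roundRobin π) j) = k := by
  apply le_antisymm
  · refine card_le_of_round_lt (π := π) (j := j) fun i hi => ?_
    simp only [units, mem_filter, mem_univ, true_and] at hi
    refine ⟨hi.1, hi.2, ?_⟩
    have h := roundRobinTime_lt (π := π) hi.1
    rw [Nat.div_lt_iff_lt_mul (NeZero.pos m)]
    exact h.trans_eq (hN.trans (mul_comm m k))
  · refine le_card_of_roundRobinPick_mem (π := π) (j := j) fun r hr => ?_
    have ht : r * m + j < N := by
      rw [hN]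
      nlinarith [j.isLt]
    refine ⟨ht, ?_⟩
    simp only [units, mem_filter, mem_univ, true_and]
    exact ⟨roundRobinPick_ne_zero ht, by rw [roundRobin_roundRobinPick ht, ofNat_mul_add]⟩

variable (hlast : ∀ j i, i ≠ 0 → π j i < π j 0)
include hlast

/-- Jobs that a machine drafts after `i` come after `i` in its priority list, so on its own
machine `i` is preceded only by jobs drafted in earlier rounds. -/
theorem schedCost_roundRobin_le (hπ : ∀ j, Function.Injective (π j)) {i : Fin (N + 1)}
    (hi : i ≠ 0) :
    schedCost (heavyWeights W) (fun _ => 1) π (roundRobin π) i ≤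
      ((roundRobinTime π i / m + 1 : ℕ) : ℝ) := by
  rw [schedCost_unit hlast hi]
  refine Nat.cast_le.2 (card_le_of_round_lt (π := π) (j := roundRobin π i) fun i' hi' => ?_)
  simp only [mem_filter, mem_univ, true_and] at hi'
  obtain ⟨hsame, hprio⟩ := hi'
  have hi'0 : i' ≠ 0 := by
    rintro rfl
    exact (hlast _ i hi).not_ge hprio
  have htime : roundRobinTime π i' ≤ roundRobinTime π i := by
    by_contra hlt
    have h := priority_roundRobinPick_le (π := π) (not_le.1 hlt).le (roundRobinTime_lt hi'0)
    rw [roundRobinPick_roundRobinTime (π := π) hi, roundRobinPick_roundRobinTime hi'0] at h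
    have heq : i' = i := hπ _ (le_antisymm hprio h)
    exact hlt (heq ▸ le_rfl)
  exact ⟨hi'0, hsame, Nat.lt_succ_of_le (Nat.div_le_div_right htime)⟩

/-- On any machine `j`, the jobs drafted by `j` in the rounds before `i` was drafted
precede `i`, since `i` was still available when they were taken. -/
theorem le_schedCost_update_roundRobin {i : Fin (N + 1)} (hi : i ≠ 0) (j : Fin m) :
    ((roundRobinTime π i / m + 1 : ℕ) : ℝ) ≤
      schedCost (heavyWeights W) (fun _ => 1) π (Function.update (roundRobin π) i j) i := by
  rw [schedCost_unit hlast hi, Function.update_self]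
  set A : Finset (Fin (N + 1)) :=
    {i' | Function.update (roundRobin π) i j i' = j ∧ π j i' ≤ π j i}
  have hiA : i ∈ A := by simp [A]
  have hbefore : roundRobinTime π i / m ≤ #(A.erase i) := by
    refine le_card_of_roundRobinPick_mem (π := π) (j := j) fun r hr => ?_
    have hti : r * m + j < roundRobinTime π i := by
      have := Nat.div_mul_le_self (roundRobinTime π i) m
      nlinarith [j.isLt]
    have ht : r * m + j < N := hti.trans (roundRobinTime_lt hi)
    have hne : roundRobinPick π (r * m + j) ≠ i := by
      intro h
      have := congrArg (roundRobinTime π) h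
      rw [roundRobinTime_roundRobinPick (π := π) ht] at this
      omega
    have hprio := priority_roundRobinPick_le (π := π) hti.le (roundRobinTime_lt hi)
    rw [roundRobinPick_roundRobinTime (π := π) hi, ofNat_mul_add] at hprio
    refine ⟨ht, mem_erase.2 ⟨hne, ?_⟩⟩
    simp only [A, mem_filter, mem_univ, true_and]
    rw [Function.update_of_ne hne, roundRobin_roundRobinPick (π := π) ht, ofNat_mul_add]
    exact ⟨rfl, hprio⟩
  rw [← card_erase_add_one hiA]
  exact_mod_cast Nat.succ_le_succ hbefore

theorem schedNE_roundRobin {k : ℕ} (hN : N = m * k) (hπ : ∀ j, Function.Injective (π j)) :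
    schedNE (heavyWeights W) (fun _ => 1) π (roundRobin π) := by
  intro i j
  rcases eq_or_ne i 0 with rfl | hi
  · rw [schedCost_heavy hlast, schedCost_heavy hlast, Function.update_self, units_update_zero,
      card_units_roundRobin hN, card_units_roundRobin hN]
  · exact (schedCost_roundRobin_le hlast hπ hi).trans (le_schedCost_update_roundRobin hlast hi j)

end RoundRobinEquilibrium

section Optimum

theorem mul_pred_add_self (m : ℕ) [NeZero m] : m * (m - 1) + m = m * m := by
  rw [← Nat.mul_succ, Nat.succ_eq_add_one, Nat.sub_add_cancel NeZero.one_le]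

/-- Job `i` goes to machine `⌈i / m⌉`: the heavy job is alone on machine `0` and every other
machine receives `m` consecutive unit jobs. -/
def balancedProfile (m : ℕ) [NeZero m] (i : Fin (m * (m - 1) + 1)) : Fin m :=
  ⟨(i + m - 1) / m, (Nat.div_lt_iff_lt_mul (NeZero.pos m)).2 (by
    have := i.isLt
    have := mul_pred_add_self m
    have := NeZero.one_le (n := m)
    omega)⟩

variable {m : ℕ} [NeZero m]

theorem balancedProfile_zero : balancedProfile m 0 = 0 := by
  ext
  exact Nat.div_eq_of_lt (by simp [NeZero.pos m])

theorem units_balancedProfile_zero : units (balancedProfile m) 0 = ∅ := by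
  ext i
  simp only [units, mem_filter, mem_univ, true_and, notMem_empty, iff_false, not_and]
  intro hi
  rw [balancedProfile, Fin.ext_iff, Fin.val_zero, Nat.div_eq_zero_iff]
  have : (i : ℕ) ≠ 0 := fun h => hi (Fin.ext h)
  have := NeZero.one_le (n := m)
  omega

theorem card_units_balancedProfile_le (j : Fin m) : #(units (balancedProfile m) j) ≤ m := by
  simpa using card_le_card_of_injOn (s := units (balancedProfile m) j) (t := range m)
    (fun i => ((i : ℕ) + m - 1) % m)
    (fun i _ => mem_range.2 (Nat.mod_lt _ (NeZero.pos m))) fun i hi i' hi' hmod => by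
      simp only [mem_coe, units, mem_filter, mem_univ, true_and] at hi hi'
      have hdiv : ((i : ℕ) + m - 1) / m = ((i' : ℕ) + m - 1) / m :=
        congrArg Fin.val (hi.2.trans hi'.2.symm)
      have h := Nat.div_add_mod ((i : ℕ) + m - 1) m
      rw [hdiv, show ((i : ℕ) + m - 1) % m = ((i' : ℕ) + m - 1) % m from hmod,
        Nat.div_add_mod] at h
      have := NeZero.one_le (n := m)
      ext
      omega

variable {π : Fin m → Fin (m * (m - 1) + 1) → Fin (m * (m - 1) + 1)}

theorem le_makespan_heavyWeights (s : Fin (m * (m - 1) + 1) → Fin m) :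
    (m : ℝ) ≤ makespan (heavyWeights (m : ℝ)) (fun _ => 1) π s := by
  refine le_of_eq_of_le ?_ (sum_div_le_makespan (heavyWeights_nonneg m.cast_nonneg))
  rw [sum_heavyWeights, eq_div_iff (NeZero.ne (m : ℝ))]
  norm_cast
  rw [add_comm, mul_pred_add_self m]

theorem makespan_balancedProfile :
    makespan (heavyWeights (m : ℝ)) (fun _ => 1) π (balancedProfile m) = m := by
  refine le_antisymm (makespan_le_of_load_le (heavyWeights_nonneg m.cast_nonneg) fun j => ?_) ?_
  · rw [load_heavyWeights, balancedProfile_zero]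
    rcases eq_or_ne 0 j with rfl | hj
    · simp [units_balancedProfile_zero]
    · rw [if_neg hj, zero_add]
      exact_mod_cast card_units_balancedProfile_le j
  · exact le_makespan_heavyWeights _

end Optimum

end PriorityScheduling

open PriorityScheduling

/-- For every m ≥ 2: the game on m identical machines with one heavy job of weight m
(job 0) and m(m-1) unit jobs, where every priority list puts the heavy job last,
has an NE; every NE has makespan 2m-1; and the optimal makespan is exactly m.
Hence the PoS w.r.t. makespan is 2 - 1/m. -/
theorem stmt11 (m : ℕ) (hm : 2 ≤ m)
    (π : Fin m → Fin (m * (m - 1) + 1) → Fin (m * (m - 1) + 1))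
    (hπ : ∀ j, Function.Bijective (π j))
    (hlast : ∀ j i, i ≠ 0 → π j i < π j 0) :
    (∃ s, schedNE (fun i => if i = 0 then (m:ℝ) else 1) (fun _ : Fin m => (1:ℝ)) π s) ∧
    (∀ s, schedNE (fun i => if i = 0 then (m:ℝ) else 1) (fun _ : Fin m => (1:ℝ)) π s →
      makespan (fun i => if i = 0 then (m:ℝ) else 1) (fun _ : Fin m => (1:ℝ)) π s
        = 2 * (m:ℝ) - 1) ∧
    (∃ t, makespan (fun i => if i = 0 then (m:ℝ) else 1) (fun _ : Fin m => (1:ℝ)) π t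
        = (m:ℝ)) ∧
    (∀ t, (m:ℝ) ≤
      makespan (fun i => if i = 0 then (m:ℝ) else 1) (fun _ : Fin m => (1:ℝ)) π t) := by
  have : NeZero m := ⟨by omega⟩
  have hW : (1 : ℝ) ≤ m := by exact_mod_cast (by omega : 1 ≤ m)
  refine ⟨⟨roundRobin π, schedNE_roundRobin hlast rfl fun j => (hπ j).injective⟩,
    fun s hs => ?_, ⟨balancedProfile m, makespan_balancedProfile⟩, le_makespan_heavyWeights⟩
  refine (makespan_of_schedNE hlast rfl hW hs).trans ?_
  rw [Nat.cast_sub (by omega), Nat.cast_one]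
  ring
end

section
/- In a scheduling game on m identical machines with arbitrary priority lists, every pure Nash equilibrium s satisfies Σ_i cost_i(s) ≤ ((n−1)/m + 1) · Σ_i w_i, where n is the number of jobs; in particular the price of anarchy with respect to the sum of completion times is at most (n−1)/m + 1. -/
/-- On m identical machines, every NE has sum of completion times at most
((n-1)/m + 1) times the total weight (hence PoA ≤ (n-1)/m + 1). -/
theorem stmt12 {n m : ℕ} (hm : 0 < m)
    (w : Fin n → ℝ) (hw : ∀ i, 0 < w i)
    (π : Fin m → Fin n → Fin n) (hπ : ∀ j, Function.Bijective (π j))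
    (s : Fin n → Fin m) (hs : schedNE w (fun _ => (1:ℝ)) π s) :
    ∑ i, schedCost w (fun _ => (1:ℝ)) π s i
      ≤ (((n:ℝ) - 1) / (m:ℝ) + 1) * ∑ i, w i := by
  set W := ∑ i, w i with hW
  have hw0 : ∀ i, (0:ℝ) ≤ w i := fun i => (hw i).le
  set L : Fin m → Fin n → ℝ := fun j i =>
    ∑ i' ∈ Finset.univ.filter (fun i' => i' ≠ i ∧ s i' = j), w i' with hL
  -- key inequality: cost_i ≤ w i + L j i for every machine j
  have key : ∀ i j, schedCost w (fun _ => (1:ℝ)) π s i ≤ w i + L j i := by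
    intro i j
    have hsub : ∀ (f : Fin n → Fin m), f i = j →
        (Finset.univ.filter (fun i' => f i' = j ∧ π j i' ≤ π j i) : Finset (Fin n)) ⊆
          insert i (Finset.univ.filter (fun i' => i' ≠ i ∧ s i' = j)) ∨ True := fun _ _ => Or.inr trivial
    by_cases hj : j = s i
    · subst hj
      simp only [schedCost, one_mul]
      have hsubset : (Finset.univ.filter
          (fun i' => s i' = s i ∧ π (s i) i' ≤ π (s i) i) : Finset (Fin n)) ⊆
          insert i (Finset.univ.filter (fun i' => i' ≠ i ∧ s i' = s i)) := by
        intro x hx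
        simp only [Finset.mem_filter, Finset.mem_univ, true_and] at hx
        by_cases hxi : x = i
        · simp [hxi]
        · simp [Finset.mem_insert, hxi, hx.1]
      calc ∑ i' ∈ Finset.univ.filter
            (fun i' => s i' = s i ∧ π (s i) i' ≤ π (s i) i), w i'
          ≤ ∑ i' ∈ insert i (Finset.univ.filter (fun i' => i' ≠ i ∧ s i' = s i)), w i' :=
            Finset.sum_le_sum_of_subset_of_nonneg hsubset (fun x _ _ => hw0 x)
        _ = w i + L (s i) i := by
            rw [Finset.sum_insert (by simp)]
    · have hne := hs i j
      refine hne.trans ?_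
      have hupd : Function.update s i j i = j := Function.update_self i j s
      simp only [schedCost, one_mul, hupd]
      have hsubset : (Finset.univ.filter
          (fun i' => Function.update s i j i' = j ∧ π j i' ≤ π j i) : Finset (Fin n)) ⊆
          insert i (Finset.univ.filter (fun i' => i' ≠ i ∧ s i' = j)) := by
        intro x hx
        simp only [Finset.mem_filter, Finset.mem_univ, true_and] at hx
        by_cases hxi : x = i
        · simp [hxi]
        · rw [Function.update_of_ne hxi] at hx
          simp [Finset.mem_insert, hxi, hx.1]
      calc ∑ i' ∈ Finset.univ.filter
            (fun i' => Function.update s i j i' = j ∧ π j i' ≤ π j i), w i'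
          ≤ ∑ i' ∈ insert i (Finset.univ.filter (fun i' => i' ≠ i ∧ s i' = j)), w i' :=
            Finset.sum_le_sum_of_subset_of_nonneg hsubset (fun x _ _ => hw0 x)
        _ = w i + L j i := by
            rw [Finset.sum_insert (by simp)]
  -- sum of L over machines equals total weight of other jobs
  have hLsum : ∀ i, ∑ j, L j i = W - w i := by
    intro i
    have h1 : ∀ j, L j i = ∑ i' ∈ Finset.univ.filter (fun i' => i' ≠ i),
        (if s i' = j then w i' else 0) := by
      intro j
      rw [hL]
      simp only
      rw [← Finset.filter_filter, Finset.sum_filter]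
    calc ∑ j, L j i
        = ∑ j, ∑ i' ∈ Finset.univ.filter (fun i' => i' ≠ i),
            (if s i' = j then w i' else 0) := by simp_rw [h1]
      _ = ∑ i' ∈ Finset.univ.filter (fun i' => i' ≠ i), ∑ j,
            (if s i' = j then w i' else 0) := Finset.sum_comm
      _ = ∑ i' ∈ Finset.univ.filter (fun i' => i' ≠ i), w i' := by
          refine Finset.sum_congr rfl fun x _ => ?_
          simp [Finset.sum_ite_eq]
      _ = W - w i := by
          rw [Finset.filter_ne', hW]
          have := Finset.sum_erase_add Finset.univ w (Finset.mem_univ i)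
          linarith
  -- averaging: cost_i ≤ w i + (W - w i)/m
  have hm0 : (0:ℝ) < (m:ℝ) := Nat.cast_pos.mpr hm
  have avg : ∀ i, schedCost w (fun _ => (1:ℝ)) π s i ≤ w i + (W - w i) / m := by
    intro i
    have h1 : (m:ℝ) * (schedCost w (fun _ => (1:ℝ)) π s i - w i) ≤ W - w i := by
      have h2 : ∑ _j : Fin m, (schedCost w (fun _ => (1:ℝ)) π s i - w i) ≤ ∑ j, L j i :=
        Finset.sum_le_sum fun j _ => by linarith [key i j]
      rw [Finset.sum_const, Finset.card_univ, Fintype.card_fin, nsmul_eq_mul, hLsum i] at h2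
      exact h2
    have := (le_div_iff₀ hm0).mpr (by linarith : (schedCost w (fun _ => (1:ℝ)) π s i - w i) * m ≤ W - w i)
    linarith
  calc ∑ i, schedCost w (fun _ => (1:ℝ)) π s i
      ≤ ∑ i, (w i + (W - w i) / m) := Finset.sum_le_sum fun i _ => avg i
    _ = W + ((n:ℝ) * W - W) / m := by
        rw [Finset.sum_add_distrib, ← Finset.sum_div, Finset.sum_sub_distrib,
          Finset.sum_const, Finset.card_univ, Fintype.card_fin, nsmul_eq_mul, ← hW]
    _ = (((n:ℝ) - 1) / (m:ℝ) + 1) * W := by field_simp; ring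
end

section
/- The symmetric unweighted congestion game with 3 players and 6 resources, where each player chooses either {e_1,e_2,e_3} or {e_4,e_5,e_6}, all resources have cost 1 per unit of congestion counted with priorities, and the priority lists are cyclic shifts (π_j(i) = i+j−1 mod 3), has no pure Nash equilibrium. -/
/-- Strategy (as a set of resources) of a player choosing `b`:
`false` ↦ {e₁,e₂,e₃} = {0,1,2}, `true` ↦ {e₄,e₅,e₆} = {3,4,5}. -/
def strat13 (b : Bool) : Finset (Fin 6) :=
  if b then {3, 4, 5} else {0, 1, 2}

/-- Cyclic priority rank of player i on resource e (π_j(i) = i + j - 1 mod 3,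
0-indexed). Lower rank = higher priority. -/
def prio13 (e : Fin 6) (i : Fin 3) : ℕ := ((i : ℕ) + (e : ℕ)) % 3

/-- Cost of player i: each resource has unit cost per unit of congestion counted
with priorities. -/
def cost13 (s : Fin 3 → Bool) (i : Fin 3) : ℝ :=
  ∑ e ∈ strat13 (s i),
    ((Finset.univ.filter (fun i' => e ∈ strat13 (s i') ∧ prio13 e i' ≤ prio13 e i)).card : ℝ)


def costN (s : Fin 3 → Bool) (i : Fin 3) : ℕ :=
  ∑ e ∈ strat13 (s i),
    (Finset.univ.filter (fun i' => e ∈ strat13 (s i') ∧ prio13 e i' ≤ prio13 e i)).card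

lemma cost13_eq (s : Fin 3 → Bool) (i : Fin 3) : cost13 s i = (costN s i : ℝ) := by
  simp [cost13, costN]

lemma key13 : ∀ s : Fin 3 → Bool, ∃ i b, costN (Function.update s i b) i < costN s i := by
  decide

/-- The 3-player symmetric congestion game with cyclic priorities has no pure NE. -/
theorem stmt13 :
    ¬ ∃ s : Fin 3 → Bool,
      ∀ (i : Fin 3) (b : Bool), cost13 s i ≤ cost13 (Function.update s i b) i := by
  rintro ⟨s, h⟩
  obtain ⟨i, b, hlt⟩ := key13 s
  have := h i b
  rw [cost13_eq, cost13_eq] at this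
  exact absurd this (by exact_mod_cast Nat.not_le.mpr hlt)
end

section
/- Every weighted congestion game with resource-specific priority lists and linear cost functions is (2, 1/2)-smooth: for all strategy profiles s and s', Σ_{i∈N} cost_i(s_i', s_{−i}) ≤ 2·cost(s') + (1/2)·cost(s). Consequently the price of anarchy with respect to the sum of weighted costs is at most 4. -/
open Finset

/-- Cost of weighted player `i` in a congestion game with linear resource costs
and resource-specific priority lists. -/
def wCost {n : ℕ} {E : Type*} [Fintype E] [DecidableEq E]
    (w : Fin n → ℝ) (c : E → ℝ) (π : E → Fin n → ℕ)
    (s : Fin n → Finset E) (i : Fin n) : ℝ :=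
  w i * ∑ e ∈ s i,
    c e * ∑ i' ∈ Finset.univ.filter (fun i' => e ∈ s i' ∧ π e i' ≤ π e i), w i'

/-- Social cost: sum of weighted players' costs. -/
def socialCost {n : ℕ} {E : Type*} [Fintype E] [DecidableEq E]
    (w : Fin n → ℝ) (c : E → ℝ) (π : E → Fin n → ℕ)
    (s : Fin n → Finset E) : ℝ :=
  ∑ i, wCost w c π s i

section Aux

variable {n : ℕ} {E : Type*} [Fintype E] [DecidableEq E]

private lemma aux_swap (s : Fin n → Finset E) (F : Fin n → E → ℝ) :
    ∑ i, ∑ e ∈ s i, F i e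
      = ∑ e : E, ∑ i ∈ univ.filter (fun i => e ∈ s i), F i e := by
  calc ∑ i, ∑ e ∈ s i, F i e
      = ∑ i : Fin n, ∑ e : E, if e ∈ s i then F i e else 0 := by
        refine Finset.sum_congr rfl fun i _ => ?_
        rw [Finset.sum_ite_mem, Finset.univ_inter]
    _ = ∑ e : E, ∑ i : Fin n, if e ∈ s i then F i e else 0 := Finset.sum_comm
    _ = ∑ e : E, ∑ i ∈ univ.filter (fun i => e ∈ s i), F i e := by
        refine Finset.sum_congr rfl fun e _ => (Finset.sum_filter _ _).symm

private lemma aux_edge (w : Fin n → ℝ) (p : Fin n → ℕ) (hp : Function.Injective p)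
    (F : Finset (Fin n)) :
    ∑ i ∈ F, w i * ∑ i' ∈ F.filter (fun i' => p i' ≤ p i), w i'
      = ((∑ i ∈ F, w i) ^ 2 + ∑ i ∈ F, (w i) ^ 2) / 2 := by
  have h1 : ∀ i, w i * ∑ i' ∈ F.filter (fun i' => p i' ≤ p i), w i'
      = ∑ i' ∈ F, if p i' ≤ p i then w i * w i' else 0 := by
    intro i
    rw [Finset.mul_sum, Finset.sum_filter]
  have key : 2 * ∑ i ∈ F, w i * ∑ i' ∈ F.filter (fun i' => p i' ≤ p i), w i'
      = (∑ i ∈ F, w i) ^ 2 + ∑ i ∈ F, (w i) ^ 2 := by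
    have hsym : ∑ i ∈ F, ∑ i' ∈ F, (if p i' ≤ p i then w i * w i' else 0)
        = ∑ i ∈ F, ∑ i' ∈ F, (if p i ≤ p i' then w i * w i' else 0) := by
      rw [Finset.sum_comm]
      exact Finset.sum_congr rfl fun i _ => Finset.sum_congr rfl fun i' _ => by
        split <;> ring
    calc 2 * ∑ i ∈ F, w i * ∑ i' ∈ F.filter (fun i' => p i' ≤ p i), w i'
        = (∑ i ∈ F, ∑ i' ∈ F, (if p i' ≤ p i then w i * w i' else 0))
          + (∑ i ∈ F, ∑ i' ∈ F, (if p i ≤ p i' then w i * w i' else 0)) := by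
          rw [← hsym]; simp_rw [h1]; ring
      _ = ∑ i ∈ F, ∑ i' ∈ F, (w i * w i' + if i = i' then w i * w i' else 0) := by
          rw [← Finset.sum_add_distrib]
          refine Finset.sum_congr rfl fun i _ => ?_
          rw [← Finset.sum_add_distrib]
          refine Finset.sum_congr rfl fun i' _ => ?_
          rcases lt_trichotomy (p i') (p i) with h | h | h
          · have hne : i ≠ i' := fun hii => by rw [hii] at h; omega
            rw [if_pos h.le, if_neg (by omega : ¬ p i ≤ p i'), if_neg hne]
          · have : i = i' := hp h.symm
            subst this
            simp
          · have hne : i ≠ i' := fun hii => by rw [hii] at h; omega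
            rw [if_neg (by omega : ¬ p i' ≤ p i), if_pos h.le, if_neg hne]
            ring
      _ = (∑ i ∈ F, w i) ^ 2 + ∑ i ∈ F, (w i) ^ 2 := by
          simp_rw [Finset.sum_add_distrib]
          congr 1
          · rw [sq, Finset.sum_mul_sum]
          · refine Finset.sum_congr rfl fun i hi => ?_
            rw [Finset.sum_ite_eq F i (fun i' => w i * w i'), if_pos hi, sq]
  linarith [key]

private lemma social_eq (w : Fin n → ℝ) (c : E → ℝ) (π : E → Fin n → ℕ)
    (hπ : ∀ e, Function.Injective (π e)) (s : Fin n → Finset E) :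
    socialCost w c π s
      = ∑ e : E, c e * (((∑ i ∈ univ.filter (fun i => e ∈ s i), w i) ^ 2
          + ∑ i ∈ univ.filter (fun i => e ∈ s i), (w i) ^ 2) / 2) := by
  unfold socialCost wCost
  have : ∀ i : Fin n, w i * ∑ e ∈ s i,
        c e * ∑ i' ∈ Finset.univ.filter (fun i' => e ∈ s i' ∧ π e i' ≤ π e i), w i'
      = ∑ e ∈ s i, w i * (c e * ∑ i' ∈ Finset.univ.filter
            (fun i' => e ∈ s i' ∧ π e i' ≤ π e i), w i') := fun i => Finset.mul_sum _ _ _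
  simp_rw [this]
  rw [aux_swap]
  refine Finset.sum_congr rfl fun e _ => ?_
  rw [← aux_edge w (π e) (hπ e) (univ.filter (fun i => e ∈ s i)), Finset.mul_sum]
  refine Finset.sum_congr rfl fun i hi => ?_
  rw [Finset.filter_filter]
  ring

end Aux

/-- Every weighted congestion game with resource-specific priority lists and
linear costs is (2, 1/2)-smooth; consequently, the price of anarchy with
respect to the sum of weighted costs is at most 4. -/
theorem stmt16 {n : ℕ} {E : Type*} [Fintype E] [DecidableEq E]
    (w : Fin n → ℝ) (hw : ∀ i, 0 < w i)
    (c : E → ℝ) (hc : ∀ e, 0 < c e)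
    (π : E → Fin n → ℕ) (hπ : ∀ e, Function.Injective (π e)) :
    (∀ s s' : Fin n → Finset E,
      ∑ i, wCost w c π (Function.update s i (s' i)) i
        ≤ 2 * socialCost w c π s' + (1 / 2) * socialCost w c π s) ∧
    (∀ (Str : Fin n → Set (Finset E)) (s s' : Fin n → Finset E),
      (∀ i, s i ∈ Str i) → (∀ i, s' i ∈ Str i) →
      (∀ (i : Fin n) (t : Finset E), t ∈ Str i →
        wCost w c π s i ≤ wCost w c π (Function.update s i t) i) →
      socialCost w c π s ≤ 4 * socialCost w c π s') := by
  have smooth : ∀ s s' : Fin n → Finset E,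
      ∑ i, wCost w c π (Function.update s i (s' i)) i
        ≤ 2 * socialCost w c π s' + (1 / 2) * socialCost w c π s := by
    intro s s'
    set W : E → ℝ := fun e => ∑ i ∈ univ.filter (fun i => e ∈ s i), w i with hW
    -- step 1: pointwise bound on deviation cost
    have step1 : ∀ i : Fin n, wCost w c π (Function.update s i (s' i)) i
        ≤ ∑ e ∈ s' i, w i * (c e * (w i + W e)) := by
      intro i
      unfold wCost
      rw [Function.update_self, Finset.mul_sum]
      refine Finset.sum_le_sum fun e he => ?_
      have hinner : ∑ i' ∈ Finset.univ.filter
            (fun i' => e ∈ Function.update s i (s' i) i' ∧ π e i' ≤ π e i), w i'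
          ≤ w i + W e := by
        have hsub : Finset.univ.filter
              (fun i' => e ∈ Function.update s i (s' i) i' ∧ π e i' ≤ π e i)
            ⊆ insert i (univ.filter (fun i' => e ∈ s i')) := by
          intro i' hi'
          simp only [Finset.mem_filter, Finset.mem_univ, true_and] at hi'
          by_cases h : i' = i
          · subst h; exact Finset.mem_insert_self _ _
          · rw [Function.update_of_ne h] at hi'
            exact Finset.mem_insert_of_mem (by simp [hi'.1])
        have h1 : ∑ i' ∈ Finset.univ.filter
              (fun i' => e ∈ Function.update s i (s' i) i' ∧ π e i' ≤ π e i), w i'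
            ≤ ∑ i' ∈ insert i (univ.filter (fun i' => e ∈ s i')), w i' :=
          Finset.sum_le_sum_of_subset_of_nonneg hsub (fun i' _ _ => (hw i').le)
        have h2 : ∑ i' ∈ insert i (univ.filter (fun i' => e ∈ s i')), w i'
            ≤ w i + W e := by
          by_cases h : i ∈ univ.filter (fun i' => e ∈ s i')
          · rw [Finset.insert_eq_self.mpr h]
            have : (0:ℝ) ≤ w i := (hw i).le
            linarith [le_refl (W e)]
          · rw [Finset.sum_insert h]
        linarith
      exact mul_le_mul_of_nonneg_left
        (mul_le_mul_of_nonneg_left hinner (hc e).le) (hw i).le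
    have step2 : ∑ i, wCost w c π (Function.update s i (s' i)) i
        ≤ ∑ i, ∑ e ∈ s' i, w i * (c e * (w i + W e)) :=
      Finset.sum_le_sum fun i _ => step1 i
    rw [aux_swap s' (fun i e => w i * (c e * (w i + W e)))] at step2
    rw [social_eq w c π hπ s', social_eq w c π hπ s]
    rw [Finset.mul_sum, Finset.mul_sum, ← Finset.sum_add_distrib]
    refine le_trans step2 (Finset.sum_le_sum fun e _ => ?_)
    set F' : Finset (Fin n) := univ.filter (fun i => e ∈ s' i) with hF'
    set F : Finset (Fin n) := univ.filter (fun i => e ∈ s i) with hF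
    have hexp : ∑ i ∈ F', w i * (c e * (w i + W e))
        = c e * ((∑ i ∈ F', (w i)^2) + (∑ i ∈ F', w i) * W e) := by
      rw [mul_add, Finset.mul_sum, Finset.sum_mul, Finset.mul_sum,
        ← Finset.sum_add_distrib]
      exact Finset.sum_congr rfl fun i _ => by ring
    rw [hexp]
    have hsq' : (0:ℝ) ≤ ∑ i ∈ F, (w i)^2 := Finset.sum_nonneg fun i _ => sq_nonneg _
    have hWe : W e = ∑ i ∈ F, w i := rfl
    nlinarith [sq_nonneg ((∑ i ∈ F', w i) - W e / 2), (hc e).le,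
      mul_nonneg (hc e).le hsq',
      mul_nonneg (hc e).le (sq_nonneg ((∑ i ∈ F', w i) - W e / 2))]
  refine ⟨smooth, ?_⟩
  intro Str s s' hs hs' hnash
  have h1 : socialCost w c π s ≤ ∑ i, wCost w c π (Function.update s i (s' i)) i :=
    Finset.sum_le_sum fun i _ => hnash i (s' i) (hs' i)
  have h2 := smooth s s'
  linarith
end

section
/- For all nonnegative reals w_1, …, w_k and every natural number d: (w_1 + ⋯ + w_k)^{d+1} ≤ (d+1) · Σ_{j=1}^{k} w_j · (w_1 + ⋯ + w_j)^d. -/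
lemma key_pow_ineq (s b : ℝ) (hs : 0 ≤ s) (hsb : s ≤ b) (d : ℕ) :
    b ^ (d + 1) ≤ s ^ (d + 1) + (d + 1 : ℝ) * (b - s) * b ^ d := by
  have hb : 0 ≤ b := hs.trans hsb
  have hgeom := geom_sum₂_mul b s (d + 1)
  have hsum : (∑ i ∈ Finset.range (d + 1), b ^ i * s ^ (d - i)) ≤ (d + 1 : ℝ) * b ^ d := by
    calc (∑ i ∈ Finset.range (d + 1), b ^ i * s ^ (d - i))
        ≤ ∑ i ∈ Finset.range (d + 1), b ^ d := by
          apply Finset.sum_le_sum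
          intro i hi
          have hid : i ≤ d := Nat.lt_succ_iff.mp (Finset.mem_range.mp hi)
          calc b ^ i * s ^ (d - i) ≤ b ^ i * b ^ (d - i) := by
                apply mul_le_mul_of_nonneg_left (pow_le_pow_left₀ hs hsb _) (pow_nonneg hb i)
            _ = b ^ d := by rw [← pow_add]; congr 1; omega
      _ = (d + 1 : ℝ) * b ^ d := by
          rw [Finset.sum_const, Finset.card_range, nsmul_eq_mul]; push_cast; ring
  have hbs : 0 ≤ b - s := sub_nonneg.mpr hsb
  have : b ^ (d + 1) - s ^ (d + 1) ≤ (d + 1 : ℝ) * b ^ d * (b - s) := by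
    rw [← hgeom]
    exact mul_le_mul_of_nonneg_right hsum hbs
  linarith

/-- For nonnegative reals w₁,…,w_k and every natural d:
(w₁+⋯+w_k)^(d+1) ≤ (d+1)·∑_j w_j·(w₁+⋯+w_j)^d. -/
theorem stmt17 {k : ℕ} (w : Fin k → ℝ) (hw : ∀ j, 0 ≤ w j) (d : ℕ) :
    (∑ j, w j) ^ (d + 1)
      ≤ (d + 1 : ℝ) * ∑ j, w j * (∑ l ∈ Finset.univ.filter (fun l => l ≤ j), w l) ^ d := by
  induction k with
  | zero => simp
  | succ k ih =>
    set w' : Fin k → ℝ := fun i => w i.castSucc with hw'def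
    have hw' : ∀ j, 0 ≤ w' j := fun j => hw _
    have IH := ih w' hw'
    have hfilter : ∀ (i : Fin k),
        (∑ l ∈ Finset.univ.filter (fun l => l ≤ i.castSucc), w l)
          = ∑ l ∈ Finset.univ.filter (fun l => l ≤ i), w' l := by
      intro i
      rw [Finset.sum_filter, Finset.sum_filter, Fin.sum_univ_castSucc]
      simp [Fin.castSucc_le_castSucc_iff, (Fin.castSucc_lt_last i).not_ge, hw'def]
    have hlast : (∑ l ∈ Finset.univ.filter (fun l => l ≤ Fin.last k), w l) = ∑ l, w l := by
      simp [Fin.le_last]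
    rw [Fin.sum_univ_castSucc (f := w),
        Fin.sum_univ_castSucc (f := fun j => w j * (∑ l ∈ Finset.univ.filter (fun l => l ≤ j), w l) ^ d)]
    simp only [hfilter, hlast]
    set S : ℝ := ∑ i : Fin k, w' i with hS
    set a : ℝ := w (Fin.last k) with ha
    set R : ℝ := ∑ i : Fin k, w' i * (∑ l ∈ Finset.univ.filter (fun l => l ≤ i), w' l) ^ d with hR
    have hSnn : 0 ≤ S := Finset.sum_nonneg fun i _ => hw' i
    have hann : 0 ≤ a := hw _
    have htot : (∑ l, w l) = S + a := by
      rw [Fin.sum_univ_castSucc (f := w)]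
    rw [htot]
    have hkey := key_pow_ineq S (S + a) hSnn (by linarith) d
    have hIH : S ^ (d + 1) ≤ (d + 1 : ℝ) * R := IH
    have : (S + a) ^ (d + 1) ≤ (d + 1 : ℝ) * R + (d + 1 : ℝ) * a * (S + a) ^ d := by
      have : (S + a) - S = a := by ring
      nlinarith [hkey, hIH]
    calc (S + a) ^ (d + 1)
        ≤ (d + 1 : ℝ) * R + (d + 1 : ℝ) * a * (S + a) ^ d := this
      _ = (d + 1 : ℝ) * (R + a * (S + a) ^ d) := by ring
end
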